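/- arXiv:2305.14077 — 9 statements merged into one kernel-verified Lean document; each statement's English description precedes it below -/
import Mathlib

section
/- Let U be a chi-squared random variable with n degrees of freedom. Then for any c in (0,1), P(U/n ≤ c) ≤ exp(-n((1-c)/2)²). -/
/-!
Chernoff's bound for the lower tail: for `t ≤ 0`,
`P(U ≤ a) ≤ exp (-t a) E[exp (t U)]`, and `E[exp (t U)] = (1 - 2t)^(-n/2)` since `U` is a sum of
`n` independent squared standard Gaussians. At `t = -(1 - c)/2` the exponent is controlled by
`log (1 + u) ≥ u - u²/2` with `u = 1 - c`.
-/

open MeasureTheory ProbabilityTheory Real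
open scoped NNReal

lemma Real.sub_sq_div_two_le_log_one_add {x : ℝ} (hx : 0 ≤ x) : x - x ^ 2 / 2 ≤ log (1 + x) :=
  calc x - x ^ 2 / 2 ≤ 2 * x / (x + 2) := by
        rw [le_div_iff₀ (by linarith)]; nlinarith [pow_nonneg hx 3]
    _ ≤ log (1 + x) := le_log_one_add_of_nonneg hx

lemma Real.exp_mul_inv_sqrt_pow_le {c : ℝ} (hc : c ≤ 1) (n : ℕ) :
    exp ((1 - c) / 2 * (c * n)) * (√(2 - c))⁻¹ ^ n ≤ exp (-n * ((1 - c) / 2) ^ 2) := by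
  have hlog := sub_sq_div_two_le_log_one_add (sub_nonneg.mpr hc)
  have hsqrt : (√(2 - c))⁻¹ = exp (-(log (2 - c) / 2)) := by
    rw [exp_neg, ← log_sqrt (by linarith), exp_log (sqrt_pos.mpr (by linarith))]
  rw [hsqrt, ← exp_nat_mul, ← exp_add, exp_le_exp]
  ring_nf at hlog ⊢
  nlinarith [(n.cast_nonneg : (0 : ℝ) ≤ n)]

namespace ProbabilityTheory

lemma mgf_sq_id_gaussianReal {v : ℝ≥0} {t : ℝ} (ht : 2 * v * t < 1) :
    mgf (fun x ↦ x ^ 2) (gaussianReal 0 v) t = (√(1 - 2 * v * t))⁻¹ := by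
  rcases eq_or_ne v 0 with rfl | hv
  · simp [gaussianReal_zero_var, mgf]
  have hb : 0 < 1 / (2 * v) - t := by
    have : (0 : ℝ) < v := by positivity
    rw [sub_pos, lt_div_iff₀ (by positivity)]; linarith
  have hdensity : ∀ x, gaussianPDFReal 0 v x • exp (t * x ^ 2)
      = (√(2 * π * v))⁻¹ * exp (-(1 / (2 * v) - t) * x ^ 2) := by
    intro x
    rw [gaussianPDFReal, smul_eq_mul, mul_assoc, ← exp_add]
    congr 2
    ring
  rw [mgf, integral_gaussianReal_eq_integral_smul hv]
  simp_rw [hdensity]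
  rw [integral_const_mul, integral_gaussian, ← sqrt_inv, ← sqrt_inv, ← sqrt_mul (by positivity)]
  congr 1
  field_simp

variable {Ω ι : Type*} [MeasurableSpace Ω] {P : Measure Ω} {v : ℝ≥0} {t : ℝ}

lemma mgf_sq_gaussianReal {X : Ω → ℝ} (hX : P.map X = gaussianReal 0 v)
    (ht : 2 * v * t < 1) : mgf (fun ω ↦ X ω ^ 2) P t = (√(1 - 2 * v * t))⁻¹ := by
  have hX_meas : AEMeasurable X P := aemeasurable_of_map_neZero (by rw [hX]; infer_instance)
  rw [← mgf_sq_id_gaussianReal ht, ← hX, mgf_map hX_meas (by fun_prop)]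
  rfl

lemma iIndepFun.mgf_sum_sq_gaussianReal {X : ι → Ω → ℝ} (hindep : iIndepFun X P)
    (hX : ∀ i, P.map (X i) = gaussianReal 0 v) (ht : 2 * v * t < 1) (s : Finset ι) :
    mgf (fun ω ↦ ∑ i ∈ s, X i ω ^ 2) P t = (√(1 - 2 * v * t))⁻¹ ^ s.card := by
  have hX_meas : ∀ i, AEMeasurable (X i) P := fun i ↦
    aemeasurable_of_map_neZero (by rw [hX i]; infer_instance)
  have hindep_sq : iIndepFun (fun i ω ↦ X i ω ^ 2) P :=
    hindep.comp (fun _ x ↦ x ^ 2) (fun _ ↦ by fun_prop)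
  have hmgf := hindep_sq.mgf_sum₀ (t := t) (fun i ↦ (hX_meas i).pow_const 2) s
  simp only [Finset.sum_fn] at hmgf
  rw [hmgf, Finset.prod_eq_pow_card fun i _ ↦ mgf_sq_gaussianReal (hX i) ht]

lemma iIndepFun.measureReal_sum_sq_le_le_exp_mul [IsProbabilityMeasure P] {X : ι → Ω → ℝ}
    (hindep : iIndepFun X P) (hX : ∀ i, P.map (X i) = gaussianReal 0 v) (ht : t ≤ 0)
    (s : Finset ι) (a : ℝ) :
    P.real {ω | ∑ i ∈ s, X i ω ^ 2 ≤ a} ≤ exp (-t * a) * (√(1 - 2 * v * t))⁻¹ ^ s.card := by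
  have ht' : 2 * v * t < 1 := by nlinarith [v.2]
  have hmgf := hindep.mgf_sum_sq_gaussianReal hX ht' s
  have hint : Integrable (fun ω ↦ exp (t * ∑ i ∈ s, X i ω ^ 2)) P := by
    rw [← mgf_pos_iff, hmgf]; positivity
  rw [← hmgf]
  exact measure_le_le_exp_mul_mgf a ht hint

end ProbabilityTheory

theorem chi_squared_lower_tail_bound_general
    {Ω : Type*} [MeasurableSpace Ω] (P : Measure Ω) [IsProbabilityMeasure P]
    (n : ℕ) (hn : 0 < n) (X : Fin n → Ω → ℝ)
    (hindep : iIndepFun X P)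
    (hgauss : ∀ i, Measure.map (X i) P = gaussianReal 0 1)
    (c : ℝ) (hc : c ∈ Set.Ioo (0 : ℝ) 1) :
    P {ω | (∑ i, (X i ω) ^ 2) / n ≤ c} ≤
      ENNReal.ofReal (Real.exp (-(n : ℝ) * ((1 - c) / 2) ^ 2)) := by
  have hset : {ω | (∑ i, (X i ω) ^ 2) / n ≤ c} = {ω | ∑ i, X i ω ^ 2 ≤ c * n} := by
    ext ω
    exact div_le_iff₀ (Nat.cast_pos.mpr hn : (0 : ℝ) < n)
  have hchernoff := hindep.measureReal_sum_sq_le_le_exp_mul hgauss (t := -((1 - c) / 2))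
    (by linarith [hc.2]) Finset.univ (c * n)
  rw [Finset.card_univ, Fintype.card_fin] at hchernoff
  rw [hset, ← ofReal_measureReal]
  refine ENNReal.ofReal_le_ofReal
    (hchernoff.trans (le_of_eq_of_le ?_ (exp_mul_inv_sqrt_pow_le hc.2.le n)))
  simp only [NNReal.coe_one, mul_one, neg_neg]
  ring_nf

/-- Let `U` be a chi-squared random variable with `n` degrees of freedom, i.e. the sum of
squares of `n` i.i.d. standard Gaussians. Then for any `c ∈ (0,1)`,
`P(U/n ≤ c) ≤ exp (-n ((1-c)/2)²)`. -/
theorem chi_squared_lower_tail_bound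
    {Ω : Type*} [MeasurableSpace Ω] (P : Measure Ω) [IsProbabilityMeasure P]
    (n : ℕ) (hn : 0 < n) (X : Fin n → Ω → ℝ)
    (hmeas : ∀ i, Measurable (X i))
    (hindep : iIndepFun X P)
    (hgauss : ∀ i, Measure.map (X i) P = gaussianReal 0 1)
    (c : ℝ) (hc : c ∈ Set.Ioo (0 : ℝ) 1) :
    P {ω | (∑ i, (X i ω) ^ 2) / n ≤ c} ≤
      ENNReal.ofReal (Real.exp (-(n : ℝ) * ((1 - c) / 2) ^ 2)) :=
  chi_squared_lower_tail_bound_general P n hn X hindep hgauss c hc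
end

section
/- For symmetric n×n real matrices K and K̃ and C ≥ 1, K and K̃ are C-equivalent (i.e., C⁻¹ λ_i(K) ≤ λ_i(K̃) ≤ C λ_i(K) for all i, where λ_1 ≥ … ≥ λ_n denote ordered eigenvalues) if and only if their Moore–Penrose pseudoinverses K⁺ and K̃⁺ are C-equivalent. -/
open Matrix Polynomial

/-- The eigenvalues of a real symmetric matrix, sorted in descending order
(`sortedEigs hK 0` is the largest eigenvalue). -/
noncomputable def sortedEigs {n : ℕ} {K : Matrix (Fin n) (Fin n) ℝ}
    (hK : K.IsHermitian) : Fin n → ℝ :=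
  fun i => (hK.eigenvalues ∘ Tuple.sort hK.eigenvalues) i.rev

/-- Two symmetric matrices are `C`-equivalent if their ordered eigenvalues satisfy
`C⁻¹ λ_i(K) ≤ λ_i(K') ≤ C λ_i(K)` for all `i`. -/
def CEquiv {n : ℕ} (C : ℝ) {K K' : Matrix (Fin n) (Fin n) ℝ}
    (hK : K.IsHermitian) (hK' : K'.IsHermitian) : Prop :=
  ∀ i, C⁻¹ * sortedEigs hK i ≤ sortedEigs hK' i ∧ sortedEigs hK' i ≤ C * sortedEigs hK i

/-- The Moore–Penrose pseudoinverse of a real symmetric matrix, via its spectral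
decomposition (inverting the nonzero eigenvalues, since `(0 : ℝ)⁻¹ = 0`). -/
noncomputable def hermPinv {n : ℕ} {K : Matrix (Fin n) (Fin n) ℝ}
    (hK : K.IsHermitian) : Matrix (Fin n) (Fin n) ℝ :=
  (hK.eigenvectorUnitary : Matrix (Fin n) (Fin n) ℝ) *
    diagonal (fun i => (hK.eigenvalues i)⁻¹) *
    star (hK.eigenvectorUnitary : Matrix (Fin n) (Fin n) ℝ)

theorem hermPinv_isHermitian {n : ℕ} {K : Matrix (Fin n) (Fin n) ℝ}
    (hK : K.IsHermitian) : (hermPinv hK).IsHermitian := by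
  unfold hermPinv
  simp only [Matrix.IsHermitian, conjTranspose_mul, conjTranspose_nonsing_inv,
    diagonal_conjTranspose, star_eq_conjTranspose, conjTranspose_conjTranspose]
  simp [Matrix.mul_assoc, Pi.star_def]

/-! ### Auxiliary: descending sort of a tuple -/

/-- Descending sort of a tuple. -/
noncomputable def sortDesc {n : ℕ} (u : Fin n → ℝ) : Fin n → ℝ :=
  fun i => (u ∘ Tuple.sort u) i.rev

/-- The multiset of values of a tuple. -/
def ms {n : ℕ} (u : Fin n → ℝ) : Multiset ℝ := Multiset.map u Finset.univ.val

lemma ms_comp_perm {n : ℕ} (u : Fin n → ℝ) (σ : Equiv.Perm (Fin n)) :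
    ms (u ∘ σ) = ms u := by
  unfold ms
  rw [← Multiset.map_map]
  congr 1
  have := Finset.map_univ_equiv σ
  simpa [Finset.map] using congrArg Finset.val this

lemma ms_map {n : ℕ} (u : Fin n → ℝ) (g : ℝ → ℝ) :
    ms (fun i => g (u i)) = Multiset.map g (ms u) := by
  unfold ms; rw [Multiset.map_map]; rfl

lemma ms_sortDesc {n : ℕ} (u : Fin n → ℝ) : ms (sortDesc u) = ms u := by
  have : sortDesc u = u ∘ (Equiv.trans Fin.revPerm (Tuple.sort u)) := rfl
  rw [this, ms_comp_perm]

lemma antitone_sortDesc {n : ℕ} (u : Fin n → ℝ) : Antitone (sortDesc u) := by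
  intro i j hij
  exact Tuple.monotone_sort u (Fin.rev_le_rev.mpr hij)

lemma ms_eq_coe_ofFn {n : ℕ} (u : Fin n → ℝ) : ms u = ↑(List.ofFn u) := by
  unfold ms
  rw [List.ofFn_eq_map]
  simp [Fin.univ_def]

lemma antitone_unique {n : ℕ} {u v : Fin n → ℝ} (hu : Antitone u) (hv : Antitone v)
    (h : ms u = ms v) : u = v := by
  rw [ms_eq_coe_ofFn, ms_eq_coe_ofFn, Multiset.coe_eq_coe] at h
  have hsu : List.Pairwise (fun a b : ℝ => b ≤ a) (List.ofFn u) := by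
    rw [List.pairwise_ofFn]
    exact fun i j hij => hu hij.le
  have hsv : List.Pairwise (fun a b : ℝ => b ≤ a) (List.ofFn v) := by
    rw [List.pairwise_ofFn]
    exact fun i j hij => hv hij.le
  haveI : IsAntisymm ℝ (fun a b : ℝ => b ≤ a) := ⟨fun _ _ h1 h2 => le_antisymm h2 h1⟩
  exact List.ofFn_injective (List.Perm.eq_of_pairwise' hsu hsv h)

/-- Order statistics are monotone. -/
lemma sort_mono {n : ℕ} {u v : Fin n → ℝ} (h : ∀ i, u i ≤ v i) (i : Fin n) :
    u (Tuple.sort u i) ≤ v (Tuple.sort v i) := by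
  set s := Tuple.sort u
  set t := Tuple.sort v
  have hcard : ((Finset.Iio i).image s).card < ((Finset.Iic i).image t).card := by
    rw [Finset.card_image_of_injective _ s.injective,
        Finset.card_image_of_injective _ t.injective]
    rw [Fin.card_Iio, Fin.card_Iic]
    exact Nat.lt_succ_self _
  obtain ⟨x, hxt, hxs⟩ := Finset.not_subset.mp (fun hsub => absurd (Finset.card_le_card hsub)
    (not_le.mpr hcard))
  obtain ⟨j, hj, rfl⟩ := Finset.mem_image.mp hxt
  have hk : i ≤ s.symm (t j) := by
    by_contra hlt
    exact hxs (Finset.mem_image.mpr ⟨s.symm (t j), Finset.mem_Iio.mpr (not_le.mp hlt),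
      s.apply_symm_apply _⟩)
  calc u (s i) ≤ u (s (s.symm (t j))) := Tuple.monotone_sort u hk
    _ = u (t j) := by rw [s.apply_symm_apply]
    _ ≤ v (t j) := h _
    _ ≤ v (t i) := Tuple.monotone_sort v (Finset.mem_Iic.mp hj)

lemma sortDesc_mono {n : ℕ} {u v : Fin n → ℝ} (h : ∀ i, u i ≤ v i) (i : Fin n) :
    sortDesc u i ≤ sortDesc v i := sort_mono h i.rev

lemma sortDesc_smul {n : ℕ} {c : ℝ} (hc : 0 < c) (u : Fin n → ℝ) :
    sortDesc (fun i => c * u i) = fun i => c * sortDesc u i := by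
  apply antitone_unique (antitone_sortDesc _)
  · intro i j hij
    exact mul_le_mul_of_nonneg_left (antitone_sortDesc u hij) hc.le
  · rw [ms_map, ms_sortDesc, ms_map, ms_sortDesc]

lemma inv_bound {C x y : ℝ} (hC : 1 ≤ C) (h1 : C⁻¹ * x ≤ y) (h2 : y ≤ C * x) :
    C⁻¹ * x⁻¹ ≤ y⁻¹ ∧ y⁻¹ ≤ C * x⁻¹ := by
  have hC0 : 0 < C := lt_of_lt_of_le one_pos hC
  have hCi : 0 < C⁻¹ := inv_pos.mpr hC0
  have hCiC : C⁻¹ ≤ C := le_trans (inv_le_one_of_one_le₀ hC) hC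
  rcases lt_trichotomy x 0 with hx | hx | hx
  · -- x < 0 : the hypotheses force equality
    have hle : C * x ≤ C⁻¹ * x := mul_le_mul_of_nonpos_right hCiC hx.le
    have e1 : y = C * x := le_antisymm h2 (hle.trans h1)
    have e2 : C⁻¹ * x = y := le_antisymm h1 (h2.trans hle)
    constructor
    · have hy1 : y⁻¹ = C⁻¹ * x⁻¹ := by rw [e1, _root_.mul_inv_rev, mul_comm]
      exact hy1.ge
    · have hy2 : y⁻¹ = C * x⁻¹ := by rw [← e2, _root_.mul_inv_rev, inv_inv, mul_comm]
      exact hy2.le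
  · subst hx
    have hy0 : y = 0 := le_antisymm (by simpa using h2) (by simpa using h1)
    simp [hy0]
  · -- x > 0
    have hy : 0 < y := lt_of_lt_of_le (by positivity) h1
    constructor
    · rw [← _root_.mul_inv_rev, mul_comm x C]
      exact inv_anti₀ hy h2
    · rw [show C * x⁻¹ = (C⁻¹ * x)⁻¹ by rw [_root_.mul_inv_rev, inv_inv, mul_comm]]
      exact inv_anti₀ (by positivity) h1

lemma forward {n : ℕ} {C : ℝ} (hC : 1 ≤ C) {a b : Fin n → ℝ}
    (h : ∀ i, C⁻¹ * a i ≤ b i ∧ b i ≤ C * a i) (i : Fin n) :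
    C⁻¹ * sortDesc (fun j => (a j)⁻¹) i ≤ sortDesc (fun j => (b j)⁻¹) i ∧
      sortDesc (fun j => (b j)⁻¹) i ≤ C * sortDesc (fun j => (a j)⁻¹) i := by
  have hC0 : 0 < C := lt_of_lt_of_le one_pos hC
  have hp : ∀ j, C⁻¹ * (a j)⁻¹ ≤ (b j)⁻¹ ∧ (b j)⁻¹ ≤ C * (a j)⁻¹ :=
    fun j => inv_bound hC (h j).1 (h j).2
  constructor
  · have := sortDesc_mono (u := fun j => C⁻¹ * (a j)⁻¹) (v := fun j => (b j)⁻¹)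
      (fun j => (hp j).1) i
    rwa [sortDesc_smul (inv_pos.mpr hC0)] at this
  · have := sortDesc_mono (u := fun j => (b j)⁻¹) (v := fun j => C * (a j)⁻¹)
      (fun j => (hp j).2) i
    rwa [sortDesc_smul hC0] at this

/-! ### Spectral facts -/

lemma charpoly_conj {n : ℕ} (A V W : Matrix (Fin n) (Fin n) ℝ)
    (hVW : V * W = 1) : (V * A * W).charpoly = A.charpoly := by
  have hWV : W * V = 1 := mul_eq_one_comm.mp hVW
  unfold Matrix.charpoly
  have hX : (C : ℝ →+* ℝ[X]).mapMatrix V * (scalar (Fin n)) X * (C : ℝ →+* ℝ[X]).mapMatrix W =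
      (scalar (Fin n)) X := by
    have h1 : (scalar (Fin n)) X * (C : ℝ →+* ℝ[X]).mapMatrix V =
        (C : ℝ →+* ℝ[X]).mapMatrix V * (scalar (Fin n)) X :=
      scalar_commute X (fun r' => Commute.all _ _) _
    rw [← h1, mul_assoc, ← _root_.map_mul, hVW, _root_.map_one, mul_one]
  have key : charmatrix (V * A * W) =
      (C : ℝ →+* ℝ[X]).mapMatrix V * charmatrix A * (C : ℝ →+* ℝ[X]).mapMatrix W := by
    unfold charmatrix
    rw [mul_sub, sub_mul, hX, _root_.map_mul, _root_.map_mul]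
  have hdet : ((C : ℝ →+* ℝ[X]).mapMatrix V).det * ((C : ℝ →+* ℝ[X]).mapMatrix W).det = 1 := by
    rw [← det_mul, ← _root_.map_mul, hVW, _root_.map_one, det_one]
  rw [key, det_mul, det_mul, mul_right_comm, hdet, one_mul]

lemma charpoly_diagonal {n : ℕ} (d : Fin n → ℝ) :
    (diagonal d).charpoly = ∏ i, (X - C (d i)) := by
  unfold Matrix.charpoly
  have : charmatrix (diagonal d) = diagonal (fun i => X - C (d i)) := by
    ext i j
    by_cases h : i = j
    · subst h; simp [charmatrix_apply_eq]
    · simp [charmatrix_apply_ne _ _ _ h, diagonal_apply_ne _ h]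
  rw [this, det_diagonal]

lemma herm_charpoly {n : ℕ} {A : Matrix (Fin n) (Fin n) ℝ} (hA : A.IsHermitian) :
    A.charpoly = ∏ i, (X - C (hA.eigenvalues i)) := by
  have hs := hA.spectral_theorem
  have : (RCLike.ofReal ∘ hA.eigenvalues : Fin n → ℝ) = hA.eigenvalues := by
    funext i; simp [RCLike.ofReal]
  rw [this] at hs
  conv_lhs => rw [hs]
  rw [Unitary.conjStarAlgAut_apply, charpoly_conj _ _ _ ((Matrix.mem_unitaryGroup_iff).mp hA.eigenvectorUnitary.2),
    charpoly_diagonal]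

lemma herm_roots {n : ℕ} {A : Matrix (Fin n) (Fin n) ℝ} (hA : A.IsHermitian) :
    A.charpoly.roots = ms hA.eigenvalues := by
  rw [herm_charpoly hA, Finset.prod_eq_multiset_prod]
  have : Multiset.map (fun i => X - C (hA.eigenvalues i)) Finset.univ.val =
      Multiset.map (fun a => X - C a) (ms hA.eigenvalues) := by
    unfold ms; rw [Multiset.map_map]; rfl
  rw [this, roots_multiset_prod_X_sub_C]

lemma ms_pinv_eigs {n : ℕ} {K : Matrix (Fin n) (Fin n) ℝ} (hK : K.IsHermitian) :
    ms (hermPinv_isHermitian hK).eigenvalues = ms (fun i => (hK.eigenvalues i)⁻¹) := by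
  rw [← herm_roots (hermPinv_isHermitian hK)]
  have : (hermPinv hK).charpoly = ∏ i, (X - C ((hK.eigenvalues i)⁻¹)) := by
    unfold hermPinv
    rw [charpoly_conj _ _ _ ((Matrix.mem_unitaryGroup_iff).mp hK.eigenvectorUnitary.2),
      charpoly_diagonal]
  rw [this, Finset.prod_eq_multiset_prod]
  have h2 : Multiset.map (fun i => X - C ((hK.eigenvalues i)⁻¹)) Finset.univ.val =
      Multiset.map (fun a => X - C a) (ms (fun i => (hK.eigenvalues i)⁻¹)) := by
    unfold ms; rw [Multiset.map_map]; rfl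
  rw [h2, roots_multiset_prod_X_sub_C]

/-! ### Glue -/

lemma sortedEigs_eq_sortDesc {n : ℕ} {K : Matrix (Fin n) (Fin n) ℝ} (hK : K.IsHermitian) :
    sortedEigs hK = sortDesc hK.eigenvalues := rfl

lemma antitone_sortedEigs {n : ℕ} {K : Matrix (Fin n) (Fin n) ℝ} (hK : K.IsHermitian) :
    Antitone (sortedEigs hK) := antitone_sortDesc _

lemma ms_sortedEigs {n : ℕ} {K : Matrix (Fin n) (Fin n) ℝ} (hK : K.IsHermitian) :
    ms (sortedEigs hK) = ms hK.eigenvalues := ms_sortDesc _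

lemma sortedEigs_pinv {n : ℕ} {K : Matrix (Fin n) (Fin n) ℝ} (hK : K.IsHermitian) :
    sortedEigs (hermPinv_isHermitian hK) = sortDesc (fun j => (sortedEigs hK j)⁻¹) := by
  apply antitone_unique (antitone_sortedEigs _) (antitone_sortDesc _)
  rw [ms_sortedEigs, ms_pinv_eigs hK, ms_sortDesc, ms_map, ms_map, ms_sortedEigs]

lemma sortDesc_inv_pinv {n : ℕ} {K : Matrix (Fin n) (Fin n) ℝ} (hK : K.IsHermitian) :
    sortDesc (fun j => (sortedEigs (hermPinv_isHermitian hK) j)⁻¹) = sortedEigs hK := by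
  apply antitone_unique (antitone_sortDesc _) (antitone_sortedEigs _)
  rw [ms_sortDesc, ms_map, sortedEigs_pinv hK, ms_sortDesc, ms_map, Multiset.map_map]
  simp [Function.comp_def]

/-- For symmetric `n×n` real matrices `K`, `K'` and `C ≥ 1`, `K` and `K'` are
`C`-equivalent if and only if their Moore–Penrose pseudoinverses are `C`-equivalent. -/
theorem cequiv_iff_pinv_cequiv {n : ℕ} (C : ℝ) (hC : 1 ≤ C)
    {K K' : Matrix (Fin n) (Fin n) ℝ} (hK : K.IsHermitian) (hK' : K'.IsHermitian) :
    CEquiv C hK hK' ↔ CEquiv C (hermPinv_isHermitian hK) (hermPinv_isHermitian hK') := by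
  constructor
  · intro h i
    rw [sortedEigs_pinv hK, sortedEigs_pinv hK']
    exact forward hC h i
  · intro h i
    have := forward hC h i
    rwa [sortDesc_inv_pinv hK, sortDesc_inv_pinv hK'] at this
end

section
/- Let k and k̃ be kernels on a set X whose RKHSs are equal as sets with C-equivalent norms (C⁻¹‖f‖_{H_k} ≤ ‖f‖_{H_{k̃}} ≤ C‖f‖_{H_k}). Then for any points x_1,…,x_n, the kernel matrices k(X,X) and k̃(X,X) are C²-equivalent, i.e., C⁻² λ_i(k(X,X)) ≤ λ_i(k̃(X,X)) ≤ C² λ_i(k(X,X)) for all i. -/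
/-!
For coefficients `v`, the quadratic form `vᵀ K v` of a kernel matrix is `‖∑ vᵢ Φ(xᵢ)‖²`. With
`f = ∑ vᵢ Φ₁(xᵢ)` and `g = ∑ vᵢ Φ₂(xᵢ)`, the compatibility `⟪T h, Φ₂ x⟫ = ⟪h, Φ₁ x⟫` gives
`‖f‖² = ⟪T f, g⟫ ≤ C ‖f‖ ‖g‖`, hence `‖f‖² ≤ C² ‖g‖²`, and the same argument with `T⁻¹` gives
`‖g‖² ≤ C² ‖f‖²`: so `K₁ ≤ C² K₂` and `K₂ ≤ C² K₁` in the Loewner order. The Courant–Fischer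
argument turns `A ≤ c B` into `λⱼ(A) ≤ c λⱼ(B)`: the span of the eigenvectors of `A` for its
`n - j` largest eigenvalues meets the span of the eigenvectors of `B` for its `j + 1` smallest
ones, and on a common nonzero vector the two quadratic forms are compared.
-/

open Matrix

open scoped RealInnerProductSpace

section OrthonormalFamily

variable {ι E : Type*} [NormedAddCommGroup E] [InnerProductSpace ℝ E]

theorem Orthonormal.finrank_span_image_finset {b : ι → E} (hb : Orthonormal ℝ b)
    (s : Finset ι) : Module.finrank ℝ (Submodule.span ℝ (b '' s)) = s.card := by
  rw [Set.image_eq_range]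
  exact (finrank_span_eq_card (hb.linearIndependent.comp _ Subtype.val_injective)).trans
    (Fintype.card_coe s)

theorem OrthonormalBasis.sum_mul_inner_sq_le_of_mem_span_image [Fintype ι]
    (b : OrthonormalBasis ι ℝ E) {s : Set ι} {f g : ι → ℝ} (hfg : ∀ l ∈ s, f l ≤ g l) {v : E}
    (hv : v ∈ Submodule.span ℝ (b '' s)) :
    ∑ l, f l * ⟪b l, v⟫ ^ 2 ≤ ∑ l, g l * ⟪b l, v⟫ ^ 2 := by
  obtain ⟨c, hc, rfl⟩ := (Finsupp.mem_span_image_iff_linearCombination ℝ).1 hv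
  refine Finset.sum_le_sum fun l _ => ?_
  by_cases hl : l ∈ s
  · exact mul_le_mul_of_nonneg_right (hfg l hl) (sq_nonneg _)
  · rw [real_inner_comm, b.orthonormal.inner_finsupp_eq_zero hl hc]
    simp

end OrthonormalFamily

namespace Matrix.IsHermitian

section Spectral

variable {ι : Type*} [Fintype ι] [DecidableEq ι] {A : Matrix ι ι ℝ} (hA : A.IsHermitian)

theorem toEuclideanLin_eigenvectorBasis (l : ι) :
    toEuclideanLin A (hA.eigenvectorBasis l) = hA.eigenvalues l • hA.eigenvectorBasis l := by
  apply WithLp.ofLp_injective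
  simpa using hA.mulVec_eigenvectorBasis l

theorem inner_toEuclideanLin_self (v : EuclideanSpace ℝ ι) :
    ⟪toEuclideanLin A v, v⟫ = ∑ l, hA.eigenvalues l * ⟪hA.eigenvectorBasis l, v⟫ ^ 2 := by
  rw [← hA.eigenvectorBasis.sum_inner_mul_inner]
  refine Finset.sum_congr rfl fun l _ => ?_
  rw [isSymmetric_toEuclideanLin_iff.2 hA, hA.toEuclideanLin_eigenvectorBasis,
    real_inner_smul_right, real_inner_comm v]
  ring

theorem mul_norm_sq_le_inner_toEuclideanLin {s : Set ι} {μ : ℝ}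
    (hμ : ∀ l ∈ s, μ ≤ hA.eigenvalues l) {v : EuclideanSpace ℝ ι}
    (hv : v ∈ Submodule.span ℝ (hA.eigenvectorBasis '' s)) :
    μ * ‖v‖ ^ 2 ≤ ⟪toEuclideanLin A v, v⟫ := by
  rw [hA.inner_toEuclideanLin_self, ← hA.eigenvectorBasis.sum_sq_inner_right, Finset.mul_sum]
  exact hA.eigenvectorBasis.sum_mul_inner_sq_le_of_mem_span_image hμ hv

theorem inner_toEuclideanLin_le_mul_norm_sq {s : Set ι} {μ : ℝ}
    (hμ : ∀ l ∈ s, hA.eigenvalues l ≤ μ) {v : EuclideanSpace ℝ ι}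
    (hv : v ∈ Submodule.span ℝ (hA.eigenvectorBasis '' s)) :
    ⟪toEuclideanLin A v, v⟫ ≤ μ * ‖v‖ ^ 2 := by
  rw [hA.inner_toEuclideanLin_self, ← hA.eigenvectorBasis.sum_sq_inner_right, Finset.mul_sum]
  exact hA.eigenvectorBasis.sum_mul_inner_sq_le_of_mem_span_image hμ hv

end Spectral

theorem sort_eigenvalues_le_mul {n : ℕ} {A B : Matrix (Fin n) (Fin n) ℝ} (hA : A.IsHermitian)
    (hB : B.IsHermitian) {c : ℝ} (hc : 0 ≤ c) (h : (c • B - A).PosSemidef) (j : Fin n) :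
    hA.eigenvalues (Tuple.sort hA.eigenvalues j)
      ≤ c * hB.eigenvalues (Tuple.sort hB.eigenvalues j) := by
  set σA := Tuple.sort hA.eigenvalues
  set σB := Tuple.sort hB.eigenvalues
  set V := Submodule.span ℝ (hA.eigenvectorBasis '' ↑((Finset.Ici j).image σA))
  set W := Submodule.span ℝ (hB.eigenvectorBasis '' ↑((Finset.Iic j).image σB))
  obtain ⟨v, hvV, hvW, hv⟩ : ∃ v ∈ V, v ∈ W ∧ v ≠ 0 := by
    by_contra! hVW
    have := Submodule.finrank_add_finrank_le_of_disjoint (Submodule.disjoint_def.2 hVW)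
    rw [hA.eigenvectorBasis.orthonormal.finrank_span_image_finset,
      hB.eigenvectorBasis.orthonormal.finrank_span_image_finset,
      Finset.card_image_of_injective _ σA.injective, Finset.card_image_of_injective _ σB.injective,
      Fin.card_Ici, Fin.card_Iic, finrank_euclideanSpace_fin] at this
    omega
  have hAv : hA.eigenvalues (σA j) * ‖v‖ ^ 2 ≤ ⟪toEuclideanLin A v, v⟫ := by
    refine hA.mul_norm_sq_le_inner_toEuclideanLin ?_ hvV
    intro m hm
    obtain ⟨l, hl, rfl⟩ := Finset.mem_image.1 hm
    exact Tuple.monotone_sort hA.eigenvalues (Finset.mem_Ici.1 hl)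
  have hBv : ⟪toEuclideanLin B v, v⟫ ≤ hB.eigenvalues (σB j) * ‖v‖ ^ 2 := by
    refine hB.inner_toEuclideanLin_le_mul_norm_sq ?_ hvW
    intro m hm
    obtain ⟨l, hl, rfl⟩ := Finset.mem_image.1 hm
    exact Tuple.monotone_sort hB.eigenvalues (Finset.mem_Iic.1 hl)
  have hAB : ⟪toEuclideanLin A v, v⟫ ≤ c * ⟪toEuclideanLin B v, v⟫ := by
    have := (isPositive_toEuclideanLin_iff.2 h).inner_nonneg_left v
    rwa [map_sub, map_smul, LinearMap.sub_apply, LinearMap.smul_apply, inner_sub_left,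
      real_inner_smul_left, sub_nonneg] at this
  refine le_of_mul_le_mul_right ?_ (by positivity : 0 < ‖v‖ ^ 2)
  calc hA.eigenvalues (σA j) * ‖v‖ ^ 2
      ≤ c * ⟪toEuclideanLin B v, v⟫ := hAv.trans hAB
    _ ≤ c * (hB.eigenvalues (σB j) * ‖v‖ ^ 2) := mul_le_mul_of_nonneg_left hBv hc
    _ = c * hB.eigenvalues (σB j) * ‖v‖ ^ 2 := (mul_assoc ..).symm

end Matrix.IsHermitian

theorem Matrix.posSemidef_sq_smul_gram_sub_gram_of_inner_eq {ι E F : Type*} [Fintype ι]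
    [NormedAddCommGroup E] [InnerProductSpace ℝ E] [NormedAddCommGroup F] [InnerProductSpace ℝ F]
    (A : E → F) {C : ℝ} (hA : ∀ h, ‖A h‖ ≤ C * ‖h‖) {u : ι → E} {w : ι → F}
    (huw : ∀ h i, ⟪A h, w i⟫ = ⟪h, u i⟫) : (C ^ 2 • gram ℝ w - gram ℝ u).PosSemidef := by
  refine .of_dotProduct_mulVec_nonneg
    (((isHermitian_gram ℝ w).smul (.all _)).sub (isHermitian_gram ℝ u)) fun v => ?_
  rw [sub_mulVec, dotProduct_sub, smul_mulVec, dotProduct_smul, star_dotProduct_gram_mulVec,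
    star_dotProduct_gram_mulVec, real_inner_self_eq_norm_sq, real_inner_self_eq_norm_sq,
    smul_eq_mul, sub_nonneg]
  set f := ∑ i, v i • u i
  set g := ∑ i, v i • w i
  have hAf : ⟪A f, g⟫ = ‖f‖ ^ 2 := by
    simp only [g, inner_sum, real_inner_smul_right, huw, ← real_inner_self_eq_norm_sq]
    simp only [f, inner_sum, real_inner_smul_right]
  have hfg : ‖f‖ ^ 2 ≤ C * ‖f‖ * ‖g‖ :=
    calc ‖f‖ ^ 2 = ⟪A f, g⟫ := hAf.symm
      _ ≤ ‖A f‖ * ‖g‖ := real_inner_le_norm _ _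
      _ ≤ C * ‖f‖ * ‖g‖ := mul_le_mul_of_nonneg_right (hA f) (norm_nonneg g)
  -- `2 C ‖f‖ ‖g‖ ≤ ‖f‖² + C² ‖g‖²`
  nlinarith [sq_nonneg (‖f‖ - C * ‖g‖)]

/-- Let `k` and `k̃` be kernels on a set `X` (realized by feature maps `Φ₁`, `Φ₂` into their
RKHSs `H₁`, `H₂`) whose RKHSs are equal as sets (witnessed by a linear equivalence `T`
preserving the realized functions) with `C`-equivalent norms,
`C⁻¹ ‖f‖_{H₁} ≤ ‖T f‖_{H₂} ≤ C ‖f‖_{H₁}`. Then for any points `x₁,…,xₙ`, the kernel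
matrices are `C²`-equivalent: `C⁻² λ_i(K₁) ≤ λ_i(K₂) ≤ C² λ_i(K₁)` for all `i`. -/
theorem kernel_matrices_of_equivalent_rkhs_are_equivalent
    {X H1 H2 : Type*} [NormedAddCommGroup H1] [InnerProductSpace ℝ H1]
    [NormedAddCommGroup H2] [InnerProductSpace ℝ H2]
    (Φ1 : X → H1) (Φ2 : X → H2)
    (T : H1 ≃ₗ[ℝ] H2)
    (hT : ∀ (f : H1) (x : X), (inner ℝ (T f) (Φ2 x) : ℝ) = (inner ℝ f (Φ1 x) : ℝ))
    (C : ℝ) (hC : 1 ≤ C)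
    (hnorm : ∀ f : H1, C⁻¹ * ‖f‖ ≤ ‖T f‖ ∧ ‖T f‖ ≤ C * ‖f‖)
    (n : ℕ) (x : Fin n → X)
    (K1 K2 : Matrix (Fin n) (Fin n) ℝ)
    (hK1def : ∀ i j, K1 i j = (inner ℝ (Φ1 (x i)) (Φ1 (x j)) : ℝ))
    (hK2def : ∀ i j, K2 i j = (inner ℝ (Φ2 (x i)) (Φ2 (x j)) : ℝ))
    (hK1 : K1.IsHermitian) (hK2 : K2.IsHermitian) :
    ∀ i, (C ^ 2)⁻¹ * sortedEigs hK1 i ≤ sortedEigs hK2 i ∧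
      sortedEigs hK2 i ≤ C ^ 2 * sortedEigs hK1 i := by
  have hC0 : 0 < C := zero_lt_one.trans_le hC
  obtain rfl : K1 = gram ℝ (Φ1 ∘ x) := Matrix.ext hK1def
  obtain rfl : K2 = gram ℝ (Φ2 ∘ x) := Matrix.ext hK2def
  have h12 : (C ^ 2 • gram ℝ (Φ2 ∘ x) - gram ℝ (Φ1 ∘ x)).PosSemidef :=
    posSemidef_sq_smul_gram_sub_gram_of_inner_eq T (fun f => (hnorm f).2) fun f i => hT f (x i)
  have h21 : (C ^ 2 • gram ℝ (Φ1 ∘ x) - gram ℝ (Φ2 ∘ x)).PosSemidef := by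
    refine posSemidef_sq_smul_gram_sub_gram_of_inner_eq T.symm (fun f => ?_) fun f i => ?_
    · simpa [inv_mul_le_iff₀ hC0] using (hnorm (T.symm f)).1
    · simpa using (hT (T.symm f) (x i)).symm
  intro i
  exact ⟨(inv_mul_le_iff₀ (by positivity)).2
      (hK1.sort_eigenvalues_le_mul hK2 (by positivity) h12 i.rev),
    hK2.sort_eigenvalues_le_mul hK1 (by positivity) h21 i.rev⟩
end

section
/- Let k be a kernel on a compact metric space X and let μ, ν be finite measures with full support on X such that ν has a density p with respect to μ satisfying 0 < c ≤ p(x) ≤ C for all x. Then the eigenvalues of the integral operators satisfy c·λ_i(T_{k,μ}) ≤ λ_i(T_{k,ν}) ≤ C·λ_i(T_{k,μ}) for all i. -/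
/-!
Multiplication by the density, `A f = p f`, is a linear isomorphism `L²(ν) ≃ L²(μ)` that
carries the quadratic form of `T_{k,ν}` to that of `T_{k,μ}`,
`⟪A f, T_{k,μ} (A f)⟫_μ = ∫∫ p(x) f(x) k(x,y) p(y) f(y) dμ dμ = ⟪f, T_{k,ν} f⟫_ν`,
while `c ‖f‖²_ν ≤ ‖A f‖²_μ = ∫ p f² dν ≤ C ‖f‖²_ν`. So the Rayleigh quotients of `T_{k,ν}` at `f`
and of `T_{k,μ}` at `A f` differ by a factor in `[c, C]`, and since `A` maps `i`-dimensional
subspaces bijectively onto `i`-dimensional subspaces, so do the Courant–Fischer min-max values.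
-/

open MeasureTheory

/-- The `i`-th largest eigenvalue of a (compact, self-adjoint, positive) operator, via the
Courant–Fischer min-max principle: the supremum over `i`-dimensional subspaces `V` of the
infimum over nonzero `f ∈ V` of the Rayleigh quotient `⟪f, T f⟫ / ‖f‖²`. -/
noncomputable def rayleighEig {E : Type*} [NormedAddCommGroup E] [InnerProductSpace ℝ E]
    (T : E →L[ℝ] E) (i : ℕ) : ℝ :=
  ⨆ V : {V : Submodule ℝ E // Module.finrank ℝ V = i},
    ⨅ f : {f : E // f ∈ V.1 ∧ f ≠ 0}, (inner ℝ (f : E) (T f) : ℝ) / ‖(f : E)‖ ^ 2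

open scoped ENNReal

section MinMax

variable {E F : Type*} [AddCommGroup E] [Module ℝ E] [AddCommGroup F] [Module ℝ F]

noncomputable def minMaxValue (φ : E → ℝ) (i : ℕ) : ℝ :=
  ⨆ V : {V : Submodule ℝ E // Module.finrank ℝ V = i}, ⨅ f : {f : E // f ∈ V.1 ∧ f ≠ 0}, φ f

theorem minMaxValue_of_subsingleton [Subsingleton E] (φ : E → ℝ) (i : ℕ) :
    minMaxValue φ i = 0 := by
  have (V : Submodule ℝ E) : IsEmpty {f : E // f ∈ V ∧ f ≠ 0} :=
    ⟨fun f => f.2.2 (Subsingleton.elim _ _)⟩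
  simp [minMaxValue, Real.iInf_of_isEmpty]

theorem minMaxValue_comp_linearEquiv (A : F ≃ₗ[ℝ] E) (φ : E → ℝ) (i : ℕ) :
    minMaxValue (φ ∘ A) i = minMaxValue φ i := by
  let e : {W : Submodule ℝ F // Module.finrank ℝ W = i} ≃
      {V : Submodule ℝ E // Module.finrank ℝ V = i} :=
    (Submodule.orderIsoMapComap A).toEquiv.subtypeEquiv fun W => by
      show _ ↔ Module.finrank ℝ (W.map (A : F →ₗ[ℝ] E)) = i
      rw [LinearEquiv.finrank_map_eq]
  rw [minMaxValue, minMaxValue, ← e.iSup_comp]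
  refine iSup_congr fun W => ?_
  let e' : {g : F // g ∈ W.1 ∧ g ≠ 0} ≃ {f : E // f ∈ (e W).1 ∧ f ≠ 0} :=
    A.toEquiv.subtypeEquiv fun g => by
      simp [e, Submodule.mem_map_equiv]
  exact e'.iInf_comp (g := fun f => φ f.1)

theorem minMaxValue_const_mul {a : ℝ} (ha : 0 ≤ a) (φ : E → ℝ) (i : ℕ) :
    minMaxValue (fun f => a * φ f) i = a * minMaxValue φ i := by
  simp only [minMaxValue, Real.mul_iSup_of_nonneg ha, Real.mul_iInf_of_nonneg ha]

theorem minMaxValue_mono {φ ψ : E → ℝ} {m M : ℝ} (hφ : ∀ f, m ≤ φ f) (hψ : ∀ f, |ψ f| ≤ M)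
    (h : ∀ f ≠ 0, φ f ≤ ψ f) (i : ℕ) : minMaxValue φ i ≤ minMaxValue ψ i := by
  refine ciSup_mono ⟨M, Set.forall_mem_range.2 fun V => ?_⟩ fun V =>
    ciInf_mono ⟨m, Set.forall_mem_range.2 fun f => hφ f⟩ fun f => h f f.2.2
  -- `⨅` over no vectors is the junk value `0`, so `ψ` must be bounded on both sides.
  rcases isEmpty_or_nonempty {f : E // f ∈ V.1 ∧ f ≠ 0} with hV | ⟨⟨f⟩⟩
  · simpa [Real.iInf_of_isEmpty] using (abs_nonneg _).trans (hψ 0)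
  · refine (ciInf_le ⟨-M, Set.forall_mem_range.2 fun g => ?_⟩ f).trans
      ((le_abs_self _).trans (hψ f))
    exact neg_le_of_abs_le (hψ g)

end MinMax

section Rayleigh

variable {E F : Type*} [NormedAddCommGroup E] [InnerProductSpace ℝ E]
  [NormedAddCommGroup F] [InnerProductSpace ℝ F]

theorem rayleighQuotient_eq_inner_div (T : E →L[ℝ] E) (f : E) :
    T.rayleighQuotient f = inner ℝ f (T f) / ‖f‖ ^ 2 := by
  rw [ContinuousLinearMap.rayleighQuotient, ContinuousLinearMap.reApplyInnerSelf_apply,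
    RCLike.re_to_real, real_inner_comm]

theorem rayleighEig_eq_minMaxValue (T : E →L[ℝ] E) (i : ℕ) :
    rayleighEig T i = minMaxValue T.rayleighQuotient i := by
  simp only [rayleighEig, minMaxValue, rayleighQuotient_eq_inner_div]

theorem mul_rayleighEig_le_and_rayleighEig_le_mul {T : E →L[ℝ] E} {S : F →L[ℝ] F}
    (A : E ≃ₗ[ℝ] F) {a b : ℝ} (ha : 0 ≤ a)
    (hAS : ∀ f, inner ℝ (A f) (S (A f)) = inner ℝ f (T f)) (hT : ∀ f, 0 ≤ inner ℝ f (T f))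
    (hA : ∀ f, ‖A f‖ ^ 2 ∈ Set.Icc (a * ‖f‖ ^ 2) (b * ‖f‖ ^ 2)) (i : ℕ) :
    a * rayleighEig S i ≤ rayleighEig T i ∧ rayleighEig T i ≤ b * rayleighEig S i := by
  simp only [rayleighEig_eq_minMaxValue]
  rcases subsingleton_or_nontrivial E with hE | hE
  · simp [← minMaxValue_comp_linearEquiv A, minMaxValue_of_subsingleton]
  have hb : 0 ≤ b := by
    obtain ⟨f, hf⟩ := exists_ne (0 : E)
    exact nonneg_of_mul_nonneg_left ((sq_nonneg _).trans (hA f).2) (by positivity)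
  have hS {r : ℝ} (hr : 0 ≤ r) (f : E) : |r * S.rayleighQuotient (A f)| ≤ r * ‖S‖ := by
    rw [abs_mul, abs_of_nonneg hr]
    exact mul_le_mul_of_nonneg_left (S.rayleighQuotient_le_norm _) hr
  have hRQ {f : E} (hf : f ≠ 0) : 0 < ‖f‖ ^ 2 ∧ 0 < ‖A f‖ ^ 2 ∧
      T.rayleighQuotient f = inner ℝ f (T f) / ‖f‖ ^ 2 ∧
      S.rayleighQuotient (A f) = inner ℝ f (T f) / ‖A f‖ ^ 2 := by
    have hAf : A f ≠ 0 := A.map_ne_zero_iff.2 hf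
    refine ⟨by positivity, by positivity, rayleighQuotient_eq_inner_div T f, ?_⟩
    rw [rayleighQuotient_eq_inner_div, hAS]
  constructor
  · calc a * minMaxValue S.rayleighQuotient i
        = minMaxValue (fun f => a * S.rayleighQuotient (A f)) i := by
          rw [minMaxValue_const_mul ha, ← minMaxValue_comp_linearEquiv A]; rfl
      _ ≤ minMaxValue T.rayleighQuotient i := by
          refine minMaxValue_mono (fun f => neg_le_of_abs_le (hS ha f))
            T.rayleighQuotient_le_norm (fun f hf => ?_) i
          obtain ⟨hf2, hAf2, hTf, hSf⟩ := hRQ hf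
          rw [hTf, hSf, mul_div_assoc', div_le_div_iff₀ hAf2 hf2]
          nlinarith [mul_le_mul_of_nonneg_left (hA f).1 (hT f)]
  · calc minMaxValue T.rayleighQuotient i
        ≤ minMaxValue (fun f => b * S.rayleighQuotient (A f)) i := by
          refine minMaxValue_mono (fun f => neg_le_of_abs_le (T.rayleighQuotient_le_norm f))
            (hS hb) (fun f hf => ?_) i
          obtain ⟨hf2, hAf2, hTf, hSf⟩ := hRQ hf
          rw [hTf, hSf, mul_div_assoc', div_le_div_iff₀ hf2 hAf2]
          nlinarith [mul_le_mul_of_nonneg_left (hA f).2 (hT f)]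
      _ = b * minMaxValue S.rayleighQuotient i := by
          rw [minMaxValue_const_mul hb, ← minMaxValue_comp_linearEquiv A]; rfl

end Rayleigh

section MulLp

variable {X : Type*} [MeasurableSpace X] {μ ν : Measure X} {q : ℝ≥0∞}

noncomputable def mulLp (g : X → ℝ) (hμν : μ ≪ ν)
    (hg : ∀ f : Lp ℝ q ν, MemLp (fun x => g x * f x) q μ) : Lp ℝ q ν →ₗ[ℝ] Lp ℝ q μ where
  toFun f := (hg f).toLp _
  map_add' f₁ f₂ := by
    simp only [← MemLp.toLp_add]
    refine MemLp.toLp_congr _ _ ?_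
    filter_upwards [hμν.ae_le (Lp.coeFn_add f₁ f₂)] with x hx
    simp only [hx, Pi.add_apply, mul_add]
  map_smul' r f := by
    simp only [RingHom.id_apply, ← MemLp.toLp_const_smul]
    refine MemLp.toLp_congr _ _ ?_
    filter_upwards [hμν.ae_le (Lp.coeFn_smul r f)] with x hx
    simp [hx, mul_left_comm]

theorem coeFn_mulLp (g : X → ℝ) (hμν : μ ≪ ν)
    (hg : ∀ f : Lp ℝ q ν, MemLp (fun x => g x * f x) q μ) (f : Lp ℝ q ν) :
    mulLp g hμν hg f =ᵐ[μ] fun x => g x * f x :=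
  MemLp.coeFn_toLp (hg f)

theorem MeasureTheory.MemLp.mul_of_le_smul {g f : X → ℝ} (hg : AEStronglyMeasurable g μ) {M : ℝ}
    (hgM : ∀ x, |g x| ≤ M) {K : ℝ≥0∞} (hK : K ≠ ∞) (hμν : μ ≤ K • ν) (hf : MemLp f q ν) :
    MemLp (fun x => g x * f x) q μ := by
  have hfμ := hf.of_measure_le_smul hK hμν
  refine hfμ.of_le_mul (c := M) (hg.mul hfμ.1) (ae_of_all _ fun x => ?_)
  rw [norm_mul, Real.norm_eq_abs]
  gcongr
  exact hgM x

end MulLp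

section Density

variable {X : Type*} [MeasurableSpace X] {μ : Measure X} {p : X → ℝ} {c C : ℝ} {q : ℝ≥0∞}

theorem withDensity_ofReal_le_smul (hpC : ∀ x, p x ≤ C) :
    μ.withDensity (fun x => ENNReal.ofReal (p x)) ≤ ENNReal.ofReal C • μ := by
  rw [← withDensity_const]
  exact withDensity_mono (ae_of_all _ fun x => ENNReal.ofReal_le_ofReal (hpC x))

theorem withDensity_ofReal_inv_withDensity_ofReal (hp : Measurable p) (hp0 : ∀ x, 0 < p x) :
    (μ.withDensity fun x => ENNReal.ofReal (p x)).withDensity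
      (fun x => ENNReal.ofReal (p x)⁻¹) = μ := by
  have hinv : Measurable fun x => ENNReal.ofReal (p x)⁻¹ := hp.inv.ennreal_ofReal
  rw [← withDensity_mul μ hp.ennreal_ofReal hinv]
  conv_rhs => rw [← withDensity_one (μ := μ)]
  congr 1
  funext x
  simp [← ENNReal.ofReal_mul (hp0 x).le, mul_inv_cancel₀ (hp0 x).ne']

theorem le_smul_withDensity_ofReal (hp : Measurable p) (hc : 0 < c) (hpc : ∀ x, c ≤ p x) :
    μ ≤ ENNReal.ofReal c⁻¹ • μ.withDensity (fun x => ENNReal.ofReal (p x)) := by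
  conv_lhs =>
    rw [← withDensity_ofReal_inv_withDensity_ofReal (μ := μ) hp fun x => hc.trans_le (hpc x)]
  exact withDensity_ofReal_le_smul fun x => inv_anti₀ hc (hpc x)

theorem integral_withDensity_ofReal (hp : Measurable p) (hp0 : ∀ x, 0 ≤ p x) (g : X → ℝ) :
    ∫ x, g x ∂μ.withDensity (fun x => ENNReal.ofReal (p x)) = ∫ x, p x * g x ∂μ := by
  rw [integral_withDensity_eq_integral_toReal_smul hp.ennreal_ofReal
    (ae_of_all _ fun _ => ENNReal.ofReal_lt_top)]
  simp [ENNReal.toReal_ofReal (hp0 _)]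

noncomputable def mulDensityEquiv (hp : Measurable p) (hc : 0 < c)
    (hbound : ∀ x, c ≤ p x ∧ p x ≤ C) :
    Lp ℝ q (μ.withDensity fun x => ENNReal.ofReal (p x)) ≃ₗ[ℝ] Lp ℝ q μ :=
  have hp0 (x : X) : 0 < p x := hc.trans_le (hbound x).1
  have hμ := le_smul_withDensity_ofReal (μ := μ) hp hc fun x => (hbound x).1
  have hν := withDensity_ofReal_le_smul (μ := μ) fun x => (hbound x).2
  have hpC (x : X) : |p x| ≤ C := (abs_of_pos (hp0 x)).trans_le (hbound x).2
  have hpc (x : X) : |(p x)⁻¹| ≤ c⁻¹ :=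
    (abs_of_pos (inv_pos.2 (hp0 x))).trans_le (inv_anti₀ hc (hbound x).1)
  have hμν : μ ≪ μ.withDensity fun x => ENNReal.ofReal (p x) :=
    Measure.absolutelyContinuous_of_le_smul hμ
  let A := mulLp p hμν fun f =>
    (Lp.memLp f).mul_of_le_smul hp.aestronglyMeasurable hpC ENNReal.ofReal_ne_top hμ
  let B := mulLp (fun x => (p x)⁻¹) (withDensity_absolutelyContinuous _ _) fun f =>
    (Lp.memLp f).mul_of_le_smul hp.inv.aestronglyMeasurable hpc ENNReal.ofReal_ne_top hν
  LinearEquiv.ofLinearMap A B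
    (LinearMap.ext fun f => Lp.ext <| by
      filter_upwards [coeFn_mulLp _ _ _ (B f), hμν.ae_le (coeFn_mulLp _ _ _ f)] with x h₁ h₂
      rw [LinearMap.comp_apply, h₁, h₂, ← mul_assoc, mul_inv_cancel₀ (hp0 x).ne', one_mul]
      rfl)
    (LinearMap.ext fun f => Lp.ext <| by
      filter_upwards [coeFn_mulLp _ _ _ (A f),
        (withDensity_absolutelyContinuous _ _).ae_le (coeFn_mulLp _ _ _ f)] with x h₁ h₂
      rw [LinearMap.comp_apply, h₁, h₂, ← mul_assoc, inv_mul_cancel₀ (hp0 x).ne', one_mul]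
      rfl)

theorem coeFn_mulDensityEquiv (hp : Measurable p) (hc : 0 < c)
    (hbound : ∀ x, c ≤ p x ∧ p x ≤ C) (f : Lp ℝ q (μ.withDensity fun x => ENNReal.ofReal (p x))) :
    mulDensityEquiv hp hc hbound f =ᵐ[μ] fun x => p x * f x := by
  rw [mulDensityEquiv, LinearEquiv.coe_ofLinearMap]
  exact coeFn_mulLp _ _ _ f

theorem MeasureTheory.L2.real_inner_eq_integral_mul (f g : Lp ℝ 2 μ) :
    inner ℝ f g = ∫ x, f x * g x ∂μ := by
  simp [L2.inner_def, mul_comm]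

theorem MeasureTheory.L2.norm_sq_eq_integral_sq (f : Lp ℝ 2 μ) : ‖f‖ ^ 2 = ∫ x, f x ^ 2 ∂μ := by
  rw [← real_inner_self_eq_norm_sq, L2.real_inner_eq_integral_mul]
  simp only [sq]

theorem norm_sq_mulDensityEquiv_mem_Icc (hp : Measurable p) (hc : 0 < c)
    (hbound : ∀ x, c ≤ p x ∧ p x ≤ C) (f : Lp ℝ 2 (μ.withDensity fun x => ENNReal.ofReal (p x))) :
    ‖mulDensityEquiv hp hc hbound f‖ ^ 2 ∈ Set.Icc (c * ‖f‖ ^ 2) (C * ‖f‖ ^ 2) := by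
  have hp0 (x : X) : 0 ≤ p x := hc.le.trans (hbound x).1
  have hAf : ‖mulDensityEquiv hp hc hbound f‖ ^ 2 =
      ∫ x, p x * f x ^ 2 ∂μ.withDensity fun x => ENNReal.ofReal (p x) := by
    rw [L2.norm_sq_eq_integral_sq, integral_withDensity_ofReal hp hp0]
    refine integral_congr_ae ?_
    filter_upwards [coeFn_mulDensityEquiv hp hc hbound f] with x hx
    rw [hx]
    ring
  have hf2 := (Lp.memLp f).integrable_sq
  have hpf2 : Integrable (fun x => p x * f x ^ 2) (μ.withDensity fun x => ENNReal.ofReal (p x)) :=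
    hf2.bdd_mul (c := C) hp.aestronglyMeasurable (ae_of_all _ fun x => by
      rw [Real.norm_eq_abs, abs_of_nonneg (hp0 x)]
      exact (hbound x).2)
  rw [hAf, L2.norm_sq_eq_integral_sq, ← integral_const_mul, ← integral_const_mul]
  constructor
  · exact integral_mono (hf2.const_mul c) hpf2 fun x => by gcongr; exact (hbound x).1
  · exact integral_mono hpf2 (hf2.const_mul C) fun x => by gcongr; exact (hbound x).2

theorem inner_apply_eq_integral_kernel {T : Lp ℝ 2 μ →L[ℝ] Lp ℝ 2 μ} {k : X → X → ℝ}
    (hT : ∀ f : Lp ℝ 2 μ, (T f : X → ℝ) =ᵐ[μ] fun x => ∫ y, k x y * f y ∂μ) (f : Lp ℝ 2 μ) :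
    inner ℝ f (T f) = ∫ x, f x * ∫ y, k x y * f y ∂μ ∂μ := by
  rw [L2.real_inner_eq_integral_mul]
  refine integral_congr_ae ?_
  filter_upwards [hT f] with x hx
  rw [hx]

theorem integral_kernel_withDensity_ofReal (hp : Measurable p) (hp0 : ∀ x, 0 ≤ p x)
    (k : X → X → ℝ) {f g : X → ℝ} (hfg : g =ᵐ[μ] fun x => p x * f x) :
    ∫ x, f x * ∫ y, k x y * f y ∂μ.withDensity (fun x => ENNReal.ofReal (p x))
      ∂μ.withDensity (fun x => ENNReal.ofReal (p x)) =
      ∫ x, g x * ∫ y, k x y * g y ∂μ ∂μ := by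
  have hk (x : X) : ∫ y, k x y * f y ∂μ.withDensity (fun x => ENNReal.ofReal (p x)) =
      ∫ y, k x y * g y ∂μ := by
    rw [integral_withDensity_ofReal hp hp0]
    refine integral_congr_ae ?_
    filter_upwards [hfg] with y hy
    rw [hy]
    ring
  rw [integral_withDensity_ofReal hp hp0]
  refine integral_congr_ae ?_
  filter_upwards [hfg] with x hx
  rw [hk, hx]
  ring

end Density

theorem integral_operator_eigenvalues_equiv_of_equiv_densities_general
    {X : Type*} [MeasurableSpace X]
    (μ ν : Measure X)
    (k : X → X → ℝ) (p : X → ℝ) (hp : Measurable p)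
    (c C : ℝ) (hc : 0 < c)
    (hbound : ∀ x, c ≤ p x ∧ p x ≤ C)
    (hν : ν = μ.withDensity (fun x => ENNReal.ofReal (p x)))
    (Tμ : Lp ℝ 2 μ →L[ℝ] Lp ℝ 2 μ) (Tν : Lp ℝ 2 ν →L[ℝ] Lp ℝ 2 ν)
    (hTμ : ∀ f : Lp ℝ 2 μ, (Tμ f : X → ℝ) =ᵐ[μ] fun x => ∫ y, k x y * f y ∂μ)
    (hTν : ∀ f : Lp ℝ 2 ν, (Tν f : X → ℝ) =ᵐ[ν] fun x => ∫ y, k x y * f y ∂ν)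
    (hTνpos : ∀ f : Lp ℝ 2 ν, 0 ≤ (inner ℝ f (Tν f) : ℝ)) :
    ∀ i : ℕ, 1 ≤ i →
      c * rayleighEig Tμ i ≤ rayleighEig Tν i ∧
      rayleighEig Tν i ≤ C * rayleighEig Tμ i := by
  intro i _
  subst hν
  have hp0 (x : X) : 0 ≤ p x := hc.le.trans (hbound x).1
  refine mul_rayleighEig_le_and_rayleighEig_le_mul (mulDensityEquiv hp hc hbound) hc.le
    (fun f => ?_) hTνpos (norm_sq_mulDensityEquiv_mem_Icc hp hc hbound) i
  rw [inner_apply_eq_integral_kernel hTμ, inner_apply_eq_integral_kernel hTν]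
  exact (integral_kernel_withDensity_ofReal hp hp0 k (coeFn_mulDensityEquiv hp hc hbound f)).symm

/-- Let `k` be a kernel on a compact metric space `X` and let `μ, ν` be finite measures of
full support such that `ν` has density `p` w.r.t. `μ` with `0 < c ≤ p ≤ C`. Then the
eigenvalues of the integral operators satisfy
`c λ_i(T_{k,μ}) ≤ λ_i(T_{k,ν}) ≤ C λ_i(T_{k,μ})` for all `i ≥ 1`. -/
theorem integral_operator_eigenvalues_equiv_of_equiv_densities
    {X : Type*} [MetricSpace X] [CompactSpace X] [MeasurableSpace X] [BorelSpace X]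
    (μ ν : Measure X) [IsFiniteMeasure μ] [IsFiniteMeasure ν]
    [μ.IsOpenPosMeasure] [ν.IsOpenPosMeasure]
    (k : X → X → ℝ) (p : X → ℝ) (hp : Measurable p)
    (c C : ℝ) (hc : 0 < c)
    (hbound : ∀ x, c ≤ p x ∧ p x ≤ C)
    (hν : ν = μ.withDensity (fun x => ENNReal.ofReal (p x)))
    (Tμ : Lp ℝ 2 μ →L[ℝ] Lp ℝ 2 μ) (Tν : Lp ℝ 2 ν →L[ℝ] Lp ℝ 2 ν)
    (hTμ : ∀ f : Lp ℝ 2 μ, (Tμ f : X → ℝ) =ᵐ[μ] fun x => ∫ y, k x y * f y ∂μ)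
    (hTν : ∀ f : Lp ℝ 2 ν, (Tν f : X → ℝ) =ᵐ[ν] fun x => ∫ y, k x y * f y ∂ν)
    (hTμcomp : IsCompactOperator Tμ) (hTνcomp : IsCompactOperator Tν)
    (hTμsa : ∀ f g : Lp ℝ 2 μ, (inner ℝ (Tμ f) g : ℝ) = inner ℝ f (Tμ g))
    (hTνsa : ∀ f g : Lp ℝ 2 ν, (inner ℝ (Tν f) g : ℝ) = inner ℝ f (Tν g))
    (hTμpos : ∀ f : Lp ℝ 2 μ, 0 ≤ (inner ℝ f (Tμ f) : ℝ))
    (hTνpos : ∀ f : Lp ℝ 2 ν, 0 ≤ (inner ℝ f (Tν f) : ℝ)) :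
    ∀ i : ℕ, 1 ≤ i →
      c * rayleighEig Tμ i ≤ rayleighEig Tν i ∧
      rayleighEig Tν i ≤ C * rayleighEig Tμ i :=
  integral_operator_eigenvalues_equiv_of_equiv_densities_general μ ν k p hp c C hc hbound hν Tμ Tν
    hTμ hTν hTνpos
end

section
/- Let ε₁,…,εₙ be i.i.d. N(0,σ²) with σ² > 0, and let (ε²)^{(i)} denote the i-th largest among ε₁²,…,εₙ². For all constants α, c > 0 there exists C ∈ (0,1) such that, for n large enough, with probability at least 1 − n^{−α}, (1/n)·∑_{i=1}^{⌊Cn⌋} (ε²)^{(i)} < c·σ². -/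
open MeasureTheory ProbabilityTheory Real
open scoped NNReal ENNReal

/-- Sorting a tuple in descending order: `descSort v 0` is the largest entry. -/
noncomputable def descSort {n : ℕ} (v : Fin n → ℝ) : Fin n → ℝ :=
  fun i => (v ∘ Tuple.sort v) i.rev

noncomputable def trunc (T : ℝ) (x : ℝ) : ℝ := if T < x ^ 2 then x ^ 2 else 0

lemma trunc_meas (T : ℝ) : Measurable (trunc T) := by
  unfold trunc
  exact Measurable.ite (measurableSet_lt measurable_const (measurable_id.pow_const 2))
    (measurable_id.pow_const 2) measurable_const

lemma trunc_nonneg (T x : ℝ) : 0 ≤ trunc T x := by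
  unfold trunc; split <;> positivity

lemma sq_le_trunc_add (T x : ℝ) (hT : 0 ≤ T) : x ^ 2 ≤ trunc T x + T := by
  unfold trunc; split
  · linarith
  · push_neg at *; linarith

lemma gauss_key (σ2 : NNReal) (hσ : 0 < σ2) (T : ℝ) (hT : 0 ≤ T) :
    Integrable (fun x => Real.exp ((4 * (σ2:ℝ))⁻¹ * trunc T x)) (gaussianReal 0 σ2) ∧
    ∫ x, Real.exp ((4 * (σ2:ℝ))⁻¹ * trunc T x) ∂(gaussianReal 0 σ2)
      ≤ 1 + 2 * Real.exp (-(T / (8 * (σ2:ℝ)))) := by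
  have hσR : (0:ℝ) < (σ2:ℝ) := hσ
  set g : ℝ → ℝ := fun x => Real.exp ((4 * (σ2:ℝ))⁻¹ * trunc T x) with hg
  set φ : ℝ → ℝ := gaussianPDFReal 0 σ2 with hφ
  set e : ℝ := Real.exp (-(T / (8 * (σ2:ℝ)))) with he
  set h : ℝ → ℝ := fun x => (Real.sqrt (2 * π * σ2))⁻¹ * Real.exp (-(8 * (σ2:ℝ))⁻¹ * x ^ 2)
    with hh
  have hsqrt_pos : 0 < Real.sqrt (2 * π * σ2) := Real.sqrt_pos.2 (by positivity)
  have hφ_def : ∀ x, φ x = (Real.sqrt (2 * π * σ2))⁻¹ * Real.exp (-(x ^ 2) / (2 * σ2)) := by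
    intro x
    simp [hφ, gaussianPDFReal, sub_zero]
  have hbound : ∀ x, φ x * g x ≤ φ x + e * h x := by
    intro x
    have hφx : 0 ≤ φ x := gaussianPDFReal_nonneg _ _ _
    have hhx : 0 ≤ h x := by
      have : 0 ≤ Real.exp (-(8 * (σ2:ℝ))⁻¹ * x ^ 2) := (Real.exp_pos _).le
      positivity
    by_cases hx : T < x ^ 2
    · have hgx : g x = Real.exp ((4 * (σ2:ℝ))⁻¹ * x ^ 2) := by
        simp [hg, trunc, hx]
      have key : φ x * g x
          = (Real.sqrt (2 * π * σ2))⁻¹ * Real.exp (-(x ^ 2) / (2 * (σ2:ℝ)) + (4 * (σ2:ℝ))⁻¹ * x ^ 2) := by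
        rw [hφ_def, hgx, mul_assoc, ← Real.exp_add]
      have key2 : e * h x
          = (Real.sqrt (2 * π * σ2))⁻¹ * Real.exp (-(T / (8 * (σ2:ℝ))) + -(8 * (σ2:ℝ))⁻¹ * x ^ 2) := by
        rw [he, hh, Real.exp_add]; ring
      have h1 : -(x ^ 2) / (2 * (σ2:ℝ)) + (4 * (σ2:ℝ))⁻¹ * x ^ 2
          = -(x ^ 2 / (8 * (σ2:ℝ))) + -(8 * (σ2:ℝ))⁻¹ * x ^ 2 := by
        field_simp
        ring
      have hle : -(x ^ 2) / (2 * (σ2:ℝ)) + (4 * (σ2:ℝ))⁻¹ * x ^ 2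
          ≤ -(T / (8 * (σ2:ℝ))) + -(8 * (σ2:ℝ))⁻¹ * x ^ 2 := by
        rw [h1]
        gcongr
      have : φ x * g x ≤ e * h x := by
        rw [key, key2]
        exact mul_le_mul_of_nonneg_left (Real.exp_le_exp.mpr hle) (by positivity)
      linarith
    · have hgx : g x = 1 := by simp [hg, trunc, hx]
      rw [hgx, mul_one]
      nlinarith [mul_nonneg (Real.exp_pos (-(T / (8 * (σ2:ℝ))))).le hhx]
  have hInt_h : Integrable h volume := by
    exact (integrable_exp_neg_mul_sq (by positivity : (0:ℝ) < (8 * (σ2:ℝ))⁻¹)).const_mul _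
  have hInt_rhs : Integrable (fun x => φ x + e * h x) volume :=
    (integrable_gaussianPDFReal 0 σ2).add (hInt_h.const_mul e)
  have hmeas_g : Measurable g := ((trunc_meas T).const_mul _).exp
  have hmeas_φg : Measurable (fun x => φ x * g x) :=
    (measurable_gaussianPDFReal 0 σ2).mul hmeas_g
  have hInt_lhs : Integrable (fun x => φ x * g x) volume := by
    refine hInt_rhs.mono' hmeas_φg.aestronglyMeasurable (ae_of_all _ fun x => ?_)
    have hφx : 0 ≤ φ x := gaussianPDFReal_nonneg _ _ _
    have hgx : 0 ≤ g x := (Real.exp_pos _).le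
    rw [Real.norm_eq_abs, abs_of_nonneg (mul_nonneg hφx hgx)]
    exact hbound x
  -- rewrite the gaussian integral as a volume integral with density
  have hγ : gaussianReal 0 σ2 = volume.withDensity
      (fun x => ((Real.toNNReal (gaussianPDFReal 0 σ2 x) : ℝ≥0) : ℝ≥0∞)) := by
    rw [gaussianReal_of_var_ne_zero 0 hσ.ne']
    rfl
  have hmeas_nn : Measurable (fun x => Real.toNNReal (gaussianPDFReal 0 σ2 x)) :=
    (measurable_gaussianPDFReal 0 σ2).real_toNNReal
  have hsmul : ∀ x, (Real.toNNReal (gaussianPDFReal 0 σ2 x)) • g x = φ x * g x := by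
    intro x
    rw [NNReal.smul_def, smul_eq_mul, Real.coe_toNNReal _ (gaussianPDFReal_nonneg _ _ _)]
  constructor
  · rw [hγ, integrable_withDensity_iff_integrable_smul hmeas_nn]
    simpa only [hsmul] using hInt_lhs
  · rw [hγ, integral_withDensity_eq_integral_smul hmeas_nn]
    refine (integral_congr_ae (ae_of_all _ hsmul)).trans_le ?_
    have step : ∫ x, φ x * g x ≤ ∫ x, (φ x + e * h x) :=
      integral_mono hInt_lhs hInt_rhs hbound
    have hinth : ∫ x, h x = 2 * Real.sqrt (2 * π * σ2) * (Real.sqrt (2 * π * σ2))⁻¹ := by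
      rw [hh]
      rw [integral_const_mul]
      have : ∫ x : ℝ, Real.exp (-(8 * (σ2:ℝ))⁻¹ * x ^ 2) = Real.sqrt (π / (8 * (σ2:ℝ))⁻¹) :=
        integral_gaussian _
      rw [this]
      have h4 : π / (8 * (σ2:ℝ))⁻¹ = 4 * (2 * π * σ2) := by field_simp; ring
      have hs4 : Real.sqrt (4 * (2 * π * σ2)) = 2 * Real.sqrt (2 * π * σ2) := by
        rw [show (4:ℝ) * (2 * π * ↑σ2) = (2 * Real.sqrt (2 * π * ↑σ2)) ^ 2 by
          rw [mul_pow, Real.sq_sqrt (by positivity)]; ring]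
        exact Real.sqrt_sq (by positivity)
      rw [h4, hs4]
      ring
    have hinth2 : ∫ x, h x = 2 := by
      rw [hinth, mul_assoc, mul_inv_cancel₀ hsqrt_pos.ne', mul_one]
    calc ∫ x, φ x * g x ≤ ∫ x, (φ x + e * h x) := step
      _ = (∫ x, φ x) + e * ∫ x, h x := by
          rw [integral_add (integrable_gaussianPDFReal 0 σ2) (hInt_h.const_mul e),
            integral_const_mul]
      _ = 1 + 2 * e := by
          rw [integral_gaussianPDFReal_eq_one 0 hσ.ne', hinth2]; ring
      _ = 1 + 2 * Real.exp (-(T / (8 * (σ2:ℝ)))) := by rw [he]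


lemma det_bound {n : ℕ} (k : ℕ) (T : ℝ) (hT : 0 ≤ T) (w : Fin n → ℝ) :
    ∑ i ∈ Finset.univ.filter (fun i : Fin n => (i : ℕ) < k),
        descSort (fun j => (w j) ^ 2) i
      ≤ (∑ j, trunc T (w j)) + k * T := by
  classical
  set v : Fin n → ℝ := fun j => (w j) ^ 2 with hv
  set sp := Tuple.sort v with hsp
  set A := Finset.univ.filter (fun i : Fin n => (i : ℕ) < k) with hA
  have hcard : A.card ≤ k := by
    have h := Finset.card_le_card_of_injOn (s := A) (t := Finset.range k)
      (fun i : Fin n => (i : ℕ))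
      (fun i hi => by
        simpa [hA] using hi)
      (Fin.val_injective.injOn)
    simpa [Finset.card_range] using h
  have hterm : ∀ i ∈ A, descSort v i ≤ trunc T (w (sp i.rev)) + T := by
    intro i _
    have : descSort v i = (w (sp i.rev)) ^ 2 := rfl
    rw [this]
    exact sq_le_trunc_add T _ hT
  calc ∑ i ∈ A, descSort v i
      ≤ ∑ i ∈ A, (trunc T (w (sp i.rev)) + T) := Finset.sum_le_sum hterm
    _ = (∑ i ∈ A, trunc T (w (sp i.rev))) + A.card * T := by
        rw [Finset.sum_add_distrib, Finset.sum_const, nsmul_eq_mul]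
    _ ≤ (∑ j, trunc T (w j)) + k * T := by
        refine add_le_add ?_ (mul_le_mul_of_nonneg_right (by exact_mod_cast hcard) hT)
        have hinj : ∀ x ∈ A, ∀ y ∈ A, sp x.rev = sp y.rev → x = y := by
          intro x _ y _ hxy
          exact Fin.rev_injective (sp.injective hxy)
        rw [← Finset.sum_image (s := A) (g := fun i : Fin n => sp i.rev) (f := fun j => trunc T (w j)) hinj]
        exact Finset.sum_le_sum_of_subset_of_nonneg (Finset.subset_univ _)
          (fun j _ _ => trunc_nonneg T _)


/-- A constant fraction of Gaussian noise cannot concentrate on less than `Θ(n)` points: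
for i.i.d. `ε₁,…,εₙ ~ N(0,σ²)` and all `α, c > 0` there is `C ∈ (0,1)` such that for `n`
large enough, with probability at least `1 - n^{-α}`, the average of the `⌊Cn⌋` largest
squared noise values is below `c σ²`. -/
theorem top_order_statistics_sum_small
    (σ2 : NNReal) (hσ : 0 < σ2) (α c : ℝ) (hα : 0 < α) (hc : 0 < c) :
    ∃ C : ℝ, C ∈ Set.Ioo (0 : ℝ) 1 ∧ ∃ n0 : ℕ, ∀ n ≥ n0,
      ∀ (Ω : Type) (_mΩ : MeasurableSpace Ω) (P : Measure Ω), IsProbabilityMeasure P →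
      ∀ ε : Fin n → Ω → ℝ, (∀ i, Measurable (ε i)) →
        iIndepFun ε P →
        (∀ i, Measure.map (ε i) P = gaussianReal 0 σ2) →
        ENNReal.ofReal (1 - (n : ℝ) ^ (-α)) ≤
          P {ω | (1 / (n : ℝ)) *
              ∑ i ∈ Finset.univ.filter (fun i : Fin n => (i : ℕ) < Nat.floor (C * n)),
                descSort (fun j => (ε j ω) ^ 2) i < c * (σ2 : ℝ)} := by
  have hσR : (0:ℝ) < (σ2:ℝ) := hσ
  set K : ℝ := 8 * max 1 (Real.log (32 / c)) with hKdef
  have hK1 : (8:ℝ) ≤ K := by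
    have := le_max_left (1:ℝ) (Real.log (32 / c))
    nlinarith
  have hKpos : (0:ℝ) < K := by linarith
  set C : ℝ := min (1/2) (c / (2 * K)) with hCdef
  have hCpos : 0 < C := lt_min (by norm_num) (by positivity)
  have hC1 : C < 1 := lt_of_le_of_lt (min_le_left _ _) (by norm_num)
  have hCK : C * K ≤ c / 2 := by
    calc C * K ≤ (c/(2*K)) * K := by
          exact mul_le_mul_of_nonneg_right (min_le_right _ _) hKpos.le
      _ = c/2 := by field_simp
  refine ⟨C, ⟨hCpos, hC1⟩, max 1 (Nat.ceil ((32 * α / c)^2) + 1), ?_⟩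
  intro n hn Ω mΩ P hP ε hε hindep hmap
  have hn1 : 1 ≤ n := le_trans (le_max_left _ _) hn
  have hnR : (0:ℝ) < n := by exact_mod_cast hn1
  -- choice of the truncation level
  set T : ℝ := K * σ2 with hTdef
  have hT : 0 ≤ T := by positivity
  set s : ℝ := (4 * (σ2:ℝ))⁻¹ with hsdef
  have hs : 0 ≤ s := by positivity
  set a : ℝ := c * σ2 / 2 with hadef
  -- the truncated variables
  set Y : Fin n → Ω → ℝ := fun i => trunc T ∘ ε i with hY
  have hYmeas : ∀ i, Measurable (Y i) := fun i => (trunc_meas T).comp (hε i)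
  have hindepY : iIndepFun Y P := hindep.comp _ (fun _ => trunc_meas T)
  have hgmeas : Measurable (fun x => Real.exp (s * trunc T x)) :=
    ((trunc_meas T).const_mul _).exp
  have hgauss := gauss_key σ2 hσ T hT
  have hint : ∀ i, Integrable (fun ω => Real.exp (s * Y i ω)) P := by
    intro i
    have h1 : Integrable (fun x => Real.exp (s * trunc T x)) (Measure.map (ε i) P) := by
      rw [hmap i]; exact hgauss.1
    exact (integrable_map_measure hgmeas.aestronglyMeasurable (hε i).aemeasurable).mp h1
  have hexpT : Real.exp (-(T / (8 * (σ2:ℝ)))) ≤ c / 32 := by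
    have hTd : T / (8 * (σ2:ℝ)) = max 1 (Real.log (32 / c)) := by
      rw [hTdef, hKdef]; field_simp
    rw [hTd]
    calc Real.exp (-(max 1 (Real.log (32 / c))))
        ≤ Real.exp (-(Real.log (32 / c))) := by
          exact Real.exp_le_exp.mpr (neg_le_neg (le_max_right _ _))
      _ = c / 32 := by
          rw [Real.exp_neg, Real.exp_log (by positivity)]
          rw [inv_div]
  have hmgf : ∀ i : Fin n, mgf (Y i) P s ≤ Real.exp (c/16) := by
    intro i
    have h1 : mgf (Y i) P s = ∫ x, Real.exp (s * trunc T x) ∂(gaussianReal 0 σ2) := by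
      rw [mgf, ← hmap i, integral_map (hε i).aemeasurable hgmeas.aestronglyMeasurable]
      rfl
    have h2 : mgf (Y i) P s ≤ 1 + 2 * Real.exp (-(T / (8 * (σ2:ℝ)))) := h1 ▸ hgauss.2
    have h3 : (1:ℝ) + 2 * Real.exp (-(T / (8 * (σ2:ℝ)))) ≤ 1 + c/16 := by
      nlinarith
    calc mgf (Y i) P s ≤ 1 + c/16 := le_trans h2 h3
      _ ≤ Real.exp (c/16) := by
          have := Real.add_one_le_exp (c/16)
          linarith
  -- Chernoff bound
  have hSint : Integrable (fun ω => Real.exp (s * (∑ i, Y i) ω)) P :=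
    hindepY.integrable_exp_mul_sum hYmeas (fun i _ => hint i)
  have hcher := measure_ge_le_exp_mul_mgf (X := ∑ i, Y i) (μ := P) (t := s)
    ((n:ℝ) * a) hs hSint
  have hmgfsum : mgf (∑ i, Y i) P s ≤ Real.exp ((n:ℝ) * (c/16)) := by
    rw [hindepY.mgf_sum hYmeas]
    calc ∏ i : Fin n, mgf (Y i) P s ≤ ∏ _i : Fin n, Real.exp (c/16) :=
          Finset.prod_le_prod (fun i _ => mgf_nonneg) (fun i _ => hmgf i)
      _ = Real.exp ((n:ℝ) * (c/16)) := by
          rw [Finset.prod_const, Finset.card_univ, Fintype.card_fin, ← Real.exp_nat_mul]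
  have hsa : s * ((n:ℝ) * a) = (n:ℝ) * (c/8) := by
    rw [hsdef, hadef]; field_simp; ring
  have htail : (P {ω | (n:ℝ) * a ≤ (∑ i, Y i) ω}).toReal ≤ (n:ℝ) ^ (-α) := by
    have h4 : Real.exp (-s * ((n:ℝ) * a)) * mgf (∑ i, Y i) P s
        ≤ Real.exp (-((n:ℝ) * (c/8))) * Real.exp ((n:ℝ) * (c/16)) := by
      rw [neg_mul, hsa]
      exact mul_le_mul_of_nonneg_left hmgfsum (Real.exp_pos _).le
    have h5 : Real.exp (-((n:ℝ) * (c/8))) * Real.exp ((n:ℝ) * (c/16))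
        = Real.exp (-((n:ℝ) * (c/16))) := by
      rw [← Real.exp_add]; ring_nf
    have hlog : α * Real.log n ≤ (n:ℝ) * (c/16) := by
      have hsq : 32 * α / c ≤ Real.sqrt n := by
        have h2 : (Nat.ceil ((32*α/c)^2) + 1 : ℕ) ≤ n := le_trans (le_max_right _ _) hn
        have h1 : ((32 * α / c)^2 : ℝ) ≤ n := by
          calc ((32*α/c)^2:ℝ) ≤ Nat.ceil ((32*α/c)^2) := Nat.le_ceil _
            _ ≤ n := by exact_mod_cast Nat.le_of_succ_le h2
        calc 32*α/c = Real.sqrt ((32*α/c)^2) := (Real.sqrt_sq (by positivity)).symm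
          _ ≤ Real.sqrt n := Real.sqrt_le_sqrt h1
      have hsqpos : 0 < Real.sqrt n := Real.sqrt_pos.2 hnR
      have hlog2 : Real.log n ≤ 2 * Real.sqrt n := by
        have hls : Real.log (Real.sqrt n) = Real.log n / 2 := Real.log_sqrt hnR.le
        have h3 : Real.log (Real.sqrt n) ≤ Real.sqrt n - 1 := Real.log_le_sub_one_of_pos hsqpos
        rw [hls] at h3; linarith
      have h6 : α * Real.log n ≤ α * (2 * Real.sqrt n) :=
        mul_le_mul_of_nonneg_left hlog2 hα.le
      have h7 : α * (2 * Real.sqrt n) ≤ (c/16) * (Real.sqrt n * Real.sqrt n) := by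
        have hsq' : 32 * α ≤ Real.sqrt n * c := (div_le_iff₀ hc).mp hsq
        nlinarith [mul_le_mul_of_nonneg_left hsq' hsqpos.le]
      calc α * Real.log n ≤ (c/16) * (Real.sqrt n * Real.sqrt n) := le_trans h6 h7
        _ = (n:ℝ) * (c/16) := by rw [Real.mul_self_sqrt hnR.le]; ring
    have h8 : Real.exp (-((n:ℝ) * (c/16))) ≤ (n:ℝ) ^ (-α) := by
      rw [Real.rpow_def_of_pos hnR]
      apply Real.exp_le_exp.mpr
      calc -((n:ℝ) * (c/16)) ≤ -(α * Real.log n) := neg_le_neg hlog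
        _ = Real.log n * (-α) := by ring
    calc (P {ω | (n:ℝ) * a ≤ (∑ i, Y i) ω}).toReal
        ≤ Real.exp (-s * ((n:ℝ) * a)) * mgf (∑ i, Y i) P s := hcher
      _ ≤ Real.exp (-((n:ℝ) * (c/16))) := by rw [← h5]; exact h4
      _ ≤ (n:ℝ) ^ (-α) := h8
  -- the good event
  set E : Set Ω := {ω | (∑ i, Y i) ω < (n:ℝ) * a} with hE
  have hEmeas : MeasurableSet E := by
    have hfun : (∑ i, Y i) = fun ω => ∑ i, Y i ω := by ext ω; simp
    have hSm : Measurable (∑ i, Y i) := by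
      rw [hfun]; exact Finset.measurable_sum _ (fun i _ => hYmeas i)
    exact measurableSet_lt hSm measurable_const
  have hEcompl : Eᶜ = {ω | (n:ℝ) * a ≤ (∑ i, Y i) ω} := by
    ext ω; simp [hE, not_lt]
  -- inclusion into the target event
  have hsub : E ⊆ {ω | (1 / (n : ℝ)) *
      ∑ i ∈ Finset.univ.filter (fun i : Fin n => (i : ℕ) < Nat.floor (C * n)),
        descSort (fun j => (ε j ω) ^ 2) i < c * (σ2 : ℝ)} := by
    intro ω hω
    simp only [hE, Set.mem_setOf_eq] at hω ⊢
    have hdb := det_bound (Nat.floor (C * n)) T hT (fun j => ε j ω)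
    have hkT : (Nat.floor (C * n) : ℝ) * T ≤ (n:ℝ) * a := by
      have hfl : (Nat.floor (C * n) : ℝ) ≤ C * n :=
        Nat.floor_le (by positivity)
      calc (Nat.floor (C * n) : ℝ) * T ≤ (C * n) * T :=
            mul_le_mul_of_nonneg_right hfl hT
        _ = (C * K) * σ2 * n := by rw [hTdef]; ring
        _ ≤ (c/2) * σ2 * n := by
            exact mul_le_mul_of_nonneg_right
              (mul_le_mul_of_nonneg_right hCK hσR.le) hnR.le
        _ = (n:ℝ) * a := by rw [hadef]; ring
    have hYsum : (∑ j, trunc T (ε j ω)) = (∑ i, Y i) ω := by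
      simp [hY, Finset.sum_apply]
    have hlt : ∑ i ∈ Finset.univ.filter (fun i : Fin n => (i : ℕ) < Nat.floor (C * n)),
        descSort (fun j => (ε j ω) ^ 2) i < (n:ℝ) * (c * σ2) := by
      calc _ ≤ (∑ j, trunc T (ε j ω)) + (Nat.floor (C * n) : ℝ) * T := hdb
        _ < (n:ℝ) * a + (n:ℝ) * a := by
            rw [hYsum]
            exact add_lt_add_of_lt_of_le hω hkT
        _ = (n:ℝ) * (c * σ2) := by rw [hadef]; ring
    calc (1 / (n : ℝ)) * ∑ i ∈ Finset.univ.filter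
          (fun i : Fin n => (i : ℕ) < Nat.floor (C * n)),
          descSort (fun j => (ε j ω) ^ 2) i
        < (1 / (n:ℝ)) * ((n:ℝ) * (c * σ2)) := by
          exact mul_lt_mul_of_pos_left hlt (by positivity)
      _ = c * σ2 := by field_simp
  -- wrap up
  have hx0 : (0:ℝ) ≤ (n:ℝ) ^ (-α) := Real.rpow_nonneg hnR.le _
  have hPEc : P Eᶜ ≤ ENNReal.ofReal ((n:ℝ) ^ (-α)) := by
    rw [hEcompl]
    rw [← ENNReal.ofReal_toReal (measure_ne_top P _)]
    exact ENNReal.ofReal_le_ofReal htail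
  have hPE : ENNReal.ofReal (1 - (n : ℝ) ^ (-α)) ≤ P E := by
    have hsplit : P E + P Eᶜ = 1 := by
      rw [measure_add_measure_compl hEmeas, measure_univ]
    have h1 : (1:ℝ≥0∞) ≤ P E + ENNReal.ofReal ((n:ℝ) ^ (-α)) := by
      rw [← hsplit]
      exact add_le_add le_rfl hPEc
    have h2 : ENNReal.ofReal (1 - (n : ℝ) ^ (-α))
        = 1 - ENNReal.ofReal ((n:ℝ) ^ (-α)) := by
      rw [ENNReal.ofReal_sub _ hx0, ENNReal.ofReal_one]
    rw [h2]
    exact tsub_le_iff_right.mpr h1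
  exact le_trans hPE (measure_mono hsub)
end

section
/- Let ε₁,…,εₙ be i.i.d. N(0,σ²) with σ² > 0, and let (ε²)^{(n−i+1)} denote the i-th smallest among ε₁²,…,εₙ². For all α > 0 and κ ∈ (0,1) there exists c > 0 such that, for n large enough, with probability at least 1 − n^{−α}, (1/n)·∑_{i=1}^{⌊(1−κ)n⌋} (ε²)^{(n−i+1)} ≥ c·σ². -/
/-!
Pick `s` with `P(|ε| < s) ≤ (1 - κ)/4`; this is possible because the Gaussian density is bounded
by `1/√(2πσ²)`. By Hoeffding's inequality, outside an event of probability
`exp(-(1 - κ)² n / 8) = o(n^{-α})`, fewer than `(1 - κ) n / 2` of the `εᵢ` satisfy `|εᵢ| < s`.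
Then at least `(1 - κ) n / 4` of the `⌊(1 - κ) n⌋` smallest squares are at least `s²`, so their
average is at least `(1 - κ) s² / 4`, a fixed multiple of `σ²`.
-/

open MeasureTheory ProbabilityTheory

/-- Sorting a tuple in ascending order: `ascSort v 0` is the smallest entry. -/
noncomputable def ascSort {n : ℕ} (v : Fin n → ℝ) : Fin n → ℝ :=
  v ∘ Tuple.sort v

open Finset Filter Real

lemma card_sub_card_filter_lt_mul_le_sum {ι : Type*} [Fintype ι] (s : Finset ι) (w : ι → ℝ)
    (hw : ∀ i, 0 ≤ w i) {t : ℝ} (ht : 0 ≤ t) :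
    ((#s : ℝ) - #{i | w i < t}) * t ≤ ∑ i ∈ s, w i := by
  classical
  have hlarge : (#s : ℝ) - #{i | w i < t} ≤ #(s.filter fun i => t ≤ w i) := by
    have hsplit := card_filter_add_card_filter_not (s := s) (fun i => t ≤ w i)
    have hsmall : #(s.filter fun i => ¬t ≤ w i) ≤ #{i | w i < t} :=
      card_le_card fun i hi => by simp_all
    have : (#s : ℝ) ≤ #(s.filter fun i => t ≤ w i) + #{i | w i < t} := by
      exact_mod_cast (by omega : #s ≤ #(s.filter fun i => t ≤ w i) + #{i | w i < t})
    linarith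
  calc ((#s : ℝ) - #{i | w i < t}) * t ≤ #(s.filter fun i => t ≤ w i) * t := by gcongr
    _ = ∑ i ∈ s.filter (fun i => t ≤ w i), t := by rw [sum_const, nsmul_eq_mul]
    _ ≤ ∑ i ∈ s.filter (fun i => t ≤ w i), w i := sum_le_sum fun i hi => (mem_filter.1 hi).2
    _ ≤ ∑ i ∈ s, w i := sum_le_sum_of_subset_of_nonneg (filter_subset _ _) fun i _ _ => hw i

section OrderStatistics

variable {n : ℕ}

lemma card_filter_ascSort_lt (v : Fin n → ℝ) (t : ℝ) :
    #{i | ascSort v i < t} = #{i | v i < t} :=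
  card_equiv (Tuple.sort v) fun i => by simp only [mem_filter, mem_univ, true_and]; rfl

lemma sub_card_filter_lt_mul_le_sum_ascSort (v : Fin n → ℝ) {m : ℕ} (hm : m ≤ n)
    (hv : ∀ i, 0 ≤ v i) {t : ℝ} (ht : 0 ≤ t) :
    ((m : ℝ) - #{i | v i < t}) * t ≤
      ∑ i ∈ univ.filter (fun i : Fin n => (i : ℕ) < m), ascSort v i := by
  simpa [Fin.card_filter_val_lt, hm, card_filter_ascSort_lt] using
    card_sub_card_filter_lt_mul_le_sum {i : Fin n | (i : ℕ) < m} (ascSort v) (fun i => hv _) ht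

lemma mul_sq_le_sum_ascSort_sq {q s : ℝ} (hq : q ≤ 1) (hqn : 4 ≤ q * n)
    (x : Fin n → ℝ) (hK : (#{i | x i ^ 2 < s ^ 2} : ℝ) < q * n / 2) :
    q * n / 4 * s ^ 2 ≤
      ∑ i ∈ univ.filter (fun i : Fin n => (i : ℕ) < ⌊q * n⌋₊), ascSort (fun j => x j ^ 2) i := by
  have hm : ⌊q * n⌋₊ ≤ n := Nat.floor_le_of_le (mul_le_of_le_one_left n.cast_nonneg hq)
  have hm' : q * n - 1 < ⌊q * n⌋₊ := by linarith [Nat.lt_floor_add_one (q * n)]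
  refine le_trans ?_ (sub_card_filter_lt_mul_le_sum_ascSort _ hm (fun i => sq_nonneg _)
    (sq_nonneg s))
  gcongr
  linarith

lemma mul_sq_div_four_le_average_ascSort_sq {q s : ℝ} (hq : q ≤ 1) (hqn : 4 ≤ q * n)
    (hs : 0 ≤ s) (x : Fin n → ℝ) (hK : (#{i | |x i| < s} : ℝ) < q * n / 2) :
    q * s ^ 2 / 4 ≤ 1 / (n : ℝ) *
      ∑ i ∈ univ.filter (fun i : Fin n => (i : ℕ) < ⌊q * n⌋₊), ascSort (fun j => x j ^ 2) i := by
  have hn : (0 : ℝ) < n := by nlinarith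
  have hcount : #{i | x i ^ 2 < s ^ 2} = #{i | |x i| < s} := by
    congr 1
    ext i
    simp [sq_lt_sq, abs_of_nonneg hs]
  calc q * s ^ 2 / 4 = 1 / n * (q * n / 4 * s ^ 2) := by
        field_simp
    _ ≤ _ := by gcongr; exact mul_sq_le_sum_ascSort_sq hq hqn x (by rwa [hcount])

end OrderStatistics

lemma gaussianPDFReal_le_inv_sqrt (μ : ℝ) (v : NNReal) (x : ℝ) :
    gaussianPDFReal μ v x ≤ (√(2 * π * v))⁻¹ := by
  refine mul_le_of_le_one_right (by positivity) (exp_le_one_iff.2 ?_)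
  exact div_nonpos_of_nonpos_of_nonneg (neg_nonpos.2 (sq_nonneg _)) (by positivity)

lemma gaussianReal_ball_le (μ : ℝ) {v : NNReal} (hv : v ≠ 0) (x r : ℝ) :
    gaussianReal μ v (Metric.ball x r) ≤ ENNReal.ofReal (2 * r / √(2 * π * v)) := by
  rw [gaussianReal_apply μ hv]
  calc ∫⁻ y in Metric.ball x r, gaussianPDF μ v y
      ≤ ∫⁻ _ in Metric.ball x r, ENNReal.ofReal (√(2 * π * v))⁻¹ :=
        lintegral_mono fun y => ENNReal.ofReal_le_ofReal (gaussianPDFReal_le_inv_sqrt μ v y)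
    _ = ENNReal.ofReal (2 * r / √(2 * π * v)) := by
        rw [setLIntegral_const, Real.volume_ball, ← ENNReal.ofReal_mul (by positivity),
          mul_comm, div_eq_mul_inv]

lemma measureReal_preimage_ball_le_of_map_eq_gaussianReal {Ω : Type*} [MeasurableSpace Ω]
    {P : Measure Ω} {X : Ω → ℝ} (hX : Measurable X) {μ : ℝ} {v : NNReal} (hv : v ≠ 0)
    (hmap : P.map X = gaussianReal μ v) (x : ℝ) {r : ℝ} (hr : 0 ≤ r) :
    P.real (X ⁻¹' Metric.ball x r) ≤ 2 * r / √(2 * π * v) := by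
  rw [← map_measureReal_apply hX measurableSet_ball, hmap]
  exact ENNReal.toReal_le_of_le_ofReal (by positivity) (gaussianReal_ball_le μ hv x r)

section Concentration

variable {Ω ι : Type*} [MeasurableSpace Ω] {P : Measure Ω} [IsProbabilityMeasure P] [Fintype ι]

lemma measureReal_sum_ge_le_of_mem_Icc_zero_one {X : ι → Ω → ℝ} (hind : iIndepFun X P)
    (hX : ∀ i, Measurable (X i)) (hX01 : ∀ i ω, X i ω ∈ Set.Icc 0 1) {p t : ℝ}
    (hp : ∀ i, P[X i] ≤ p) (ht : 0 ≤ t) :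
    P.real {ω | Fintype.card ι * p + t ≤ ∑ i, X i ω} ≤ exp (-2 * t ^ 2 / Fintype.card ι) := by
  have hcentered : iIndepFun (fun i ω => X i ω - P[X i]) P :=
    (hind.comp (fun i (y : ℝ) => y - P[X i]) fun _ => measurable_id.sub_const _ :)
  have hsubG : ∀ i ∈ (univ : Finset ι),
      HasSubgaussianMGF (fun ω => X i ω - P[X i]) ((‖(1 : ℝ) - 0‖₊ / 2) ^ 2) P :=
    fun i _ => hasSubgaussianMGF_of_mem_Icc (hX i).aemeasurable (ae_of_all _ (hX01 i))
  have hmean : ∑ i, P[X i] ≤ Fintype.card ι * p := by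
    simpa using sum_le_sum fun i (_ : i ∈ univ) => hp i
  calc P.real {ω | Fintype.card ι * p + t ≤ ∑ i, X i ω}
      ≤ P.real {ω | t ≤ ∑ i, (X i ω - P[X i])} := by
        refine measureReal_mono fun ω hω => ?_
        simp only [Set.mem_ofPred_eq, sum_sub_distrib] at hω ⊢
        linarith
    _ ≤ exp (-t ^ 2 / (2 * ∑ _i : ι, ((‖(1 : ℝ) - 0‖₊ / 2) ^ 2 : NNReal))) :=
        HasSubgaussianMGF.measure_sum_ge_le_of_iIndepFun hcentered hsubG ht
    _ = exp (-2 * t ^ 2 / Fintype.card ι) := by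
        congr 1
        simp only [sub_zero, nnnorm_one, sum_const, card_univ, nsmul_eq_mul, NNReal.coe_mul,
          NNReal.coe_natCast, NNReal.coe_pow, NNReal.coe_div, NNReal.coe_one, NNReal.coe_ofNat]
        ring

open Classical in
lemma measureReal_card_filter_mem_ge_le {β : Type*} [MeasurableSpace β] {ε : ι → Ω → β}
    (hind : iIndepFun ε P) (hε : ∀ i, Measurable (ε i)) {S : Set β} (hS : MeasurableSet S)
    {p t : ℝ} (hp : ∀ i, P.real (ε i ⁻¹' S) ≤ p) (ht : 0 ≤ t) :
    P.real {ω | Fintype.card ι * p + t ≤ #{i | ε i ω ∈ S}} ≤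
      exp (-2 * t ^ 2 / Fintype.card ι) := by
  have hind' : iIndepFun (fun i => (ε i ⁻¹' S).indicator (1 : Ω → ℝ)) P :=
    (hind.comp (fun _ => S.indicator (1 : β → ℝ)) fun _ => measurable_one.indicator hS :)
  have hbound := measureReal_sum_ge_le_of_mem_Icc_zero_one hind'
    (fun i => measurable_one.indicator (hε i hS))
    (fun i ω => by by_cases h : ω ∈ ε i ⁻¹' S <;> simp [h])
    (fun i => (integral_indicator_one (hε i hS)).trans_le (hp i)) ht
  convert hbound using 6 with ω
  simp [Set.indicator_apply]

lemma ofReal_one_sub_le_measure_compl {B : Set Ω} {δ : ℝ} (hB : P.real B ≤ δ) :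
    ENNReal.ofReal (1 - δ) ≤ P Bᶜ :=
  calc ENNReal.ofReal (1 - δ) ≤ ENNReal.ofReal (1 - P.real B) :=
        ENNReal.ofReal_le_ofReal (by linarith)
    _ = 1 - P B := by
        rw [ENNReal.ofReal_sub _ measureReal_nonneg, ENNReal.ofReal_one, ofReal_measureReal]
    _ ≤ P Bᶜ := by
        rw [tsub_le_iff_right, ← measure_univ (μ := P), ← Set.compl_union_self B]
        exact measure_union_le _ _

end Concentration

lemma eventually_exp_neg_mul_le_rpow {a : ℝ} (ha : 0 < a) (b : ℝ) :
    ∀ᶠ n : ℕ in atTop, exp (-a * n) ≤ (n : ℝ) ^ b := by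
  filter_upwards [tendsto_natCast_atTop_atTop.eventually
    ((isLittleO_exp_neg_mul_rpow_atTop ha b).bound one_pos)] with n hn
  simpa [abs_of_nonneg (rpow_nonneg n.cast_nonneg b)] using hn

theorem bottom_order_statistics_sum_large_general
    (σ2 : NNReal) (hσ : 0 < σ2) (α κ : ℝ) (hκ : κ ∈ Set.Ioo (0 : ℝ) 1) :
    ∃ c : ℝ, 0 < c ∧ ∃ n0 : ℕ, ∀ n ≥ n0,
      ∀ (Ω : Type) (_mΩ : MeasurableSpace Ω) (P : Measure Ω), IsProbabilityMeasure P →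
      ∀ ε : Fin n → Ω → ℝ, (∀ i, Measurable (ε i)) →
        iIndepFun ε P →
        (∀ i, Measure.map (ε i) P = gaussianReal 0 σ2) →
        ENNReal.ofReal (1 - (n : ℝ) ^ (-α)) ≤
          P {ω | c * (σ2 : ℝ) ≤ (1 / (n : ℝ)) *
              ∑ i ∈ Finset.univ.filter (fun i : Fin n => (i : ℕ) < Nat.floor ((1 - κ) * n)),
                ascSort (fun j => (ε j ω) ^ 2) i} := by
  classical
  obtain ⟨hκ0, hκ1⟩ := hκ
  set q := 1 - κ
  have hq : 0 < q := by linarith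
  have hsqrt : 0 < √(2 * π * σ2) := Real.sqrt_pos.2 (by positivity)
  set s := q * √(2 * π * σ2) / 8 with hs
  refine ⟨q ^ 3 * π / 128, by positivity, ?_⟩
  obtain ⟨n0, hn0⟩ := eventually_atTop.1 ((eventually_exp_neg_mul_le_rpow
    (show 0 < q ^ 2 / 8 by positivity) (-α)).and
    (tendsto_natCast_atTop_atTop.eventually_ge_atTop (4 / q)))
  refine ⟨n0, fun n hn Ω _ P _ ε hε hind hmap => ?_⟩
  obtain ⟨hdecay, hqn⟩ := hn0 n hn
  have hn : (0 : ℝ) < n := (div_pos four_pos hq).trans_le hqn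
  rw [div_le_iff₀' hq] at hqn
  have hsmall : ∀ i, P.real (ε i ⁻¹' Metric.ball 0 s) ≤ q / 4 := fun i =>
    (measureReal_preimage_ball_le_of_map_eq_gaussianReal (hε i) hσ.ne' (hmap i) 0
      (by positivity)).trans_eq (by field_simp; ring)
  have htail := measureReal_card_filter_mem_ge_le hind hε measurableSet_ball hsmall
    (t := q * n / 4) (by positivity)
  rw [Fintype.card_fin, show -2 * (q * n / 4) ^ 2 / n = -(q ^ 2 / 8) * n by field_simp; ring]
    at htail
  refine (ofReal_one_sub_le_measure_compl (htail.trans hdecay)).trans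
    (measure_mono fun ω hω => ?_)
  simp only [Set.mem_compl_iff, Set.mem_ofPred_eq, not_le, Metric.mem_ball, dist_zero_right,
    Real.norm_eq_abs] at hω
  calc q ^ 3 * π / 128 * σ2 = q * s ^ 2 / 4 := by
        rw [hs, div_pow, mul_pow, sq_sqrt (by positivity)]
        ring
    _ ≤ _ := mul_sq_div_four_le_average_ascSort_sq (by linarith) hqn (by positivity)
        (fun j => ε j ω) (by linarith)

/-- `Θ(n)` points amount to a constant fraction of Gaussian noise: for i.i.d.
`ε₁,…,εₙ ~ N(0,σ²)`, all `α > 0` and `κ ∈ (0,1)` there is `c > 0` such that for `n` large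
enough, with probability at least `1 - n^{-α}`, the average of the `⌊(1-κ)n⌋` smallest
squared noise values is at least `c σ²`. -/
theorem bottom_order_statistics_sum_large
    (σ2 : NNReal) (hσ : 0 < σ2) (α κ : ℝ) (hα : 0 < α) (hκ : κ ∈ Set.Ioo (0 : ℝ) 1) :
    ∃ c : ℝ, 0 < c ∧ ∃ n0 : ℕ, ∀ n ≥ n0,
      ∀ (Ω : Type) (_mΩ : MeasurableSpace Ω) (P : Measure Ω), IsProbabilityMeasure P →
      ∀ ε : Fin n → Ω → ℝ, (∀ i, Measurable (ε i)) →
        iIndepFun ε P →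
        (∀ i, Measure.map (ε i) P = gaussianReal 0 σ2) →
        ENNReal.ofReal (1 - (n : ℝ) ^ (-α)) ≤
          P {ω | c * (σ2 : ℝ) ≤ (1 / (n : ℝ)) *
              ∑ i ∈ Finset.univ.filter (fun i : Fin n => (i : ℕ) < Nat.floor ((1 - κ) * n)),
                ascSort (fun j => (ε j ω) ^ 2) i} :=
  bottom_order_statistics_sum_large_general σ2 hσ α κ hκ
end

section
/- For x > 0, the standard normal CDF Φ satisfies φ(x)/(1+x) < 1 − Φ(x) < 2φ(x)/(1+x), where φ is the standard normal density. -/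
open ProbabilityTheory MeasureTheory Set Filter Real
open scoped Topology NNReal

/-!
Since `φ' t = -t φ t`, the function `-φ t / (1 + t)` is an antiderivative of
`φ t * (1 + t + t²) / (1 + t)²` on `(-1, ∞)` and vanishes at infinity, so
`φ x / (1 + x) = ∫_x^∞ φ t * (1 + t + t²) / (1 + t)² dt`. The weight
`(1 + t + t²) / (1 + t)² = 1 - t / (1 + t)²` lies strictly between `1/2` and `1` for `t > 0`,
and comparing with `1 - Φ x = ∫_x^∞ φ` gives both bounds.
-/

theorem hasDerivAt_gaussianPDFReal (μ : ℝ) (v : ℝ≥0) (x : ℝ) :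
    HasDerivAt (gaussianPDFReal μ v) (-(x - μ) / v * gaussianPDFReal μ v x) x := by
  have hexp : HasDerivAt (fun t => -(t - μ) ^ 2 / (2 * v)) (-(x - μ) / v) x := by
    refine ((((hasDerivAt_id' x).sub_const μ).pow 2).neg.div_const (2 * (v : ℝ))).congr_deriv ?_
    push_cast
    ring
  refine (hexp.exp.const_mul (√(2 * π * v))⁻¹).congr_deriv ?_
  rw [gaussianPDFReal]
  ring

theorem tendsto_gaussianPDFReal_atTop (μ : ℝ) (v : ℝ≥0) :
    Tendsto (gaussianPDFReal μ v) atTop (𝓝 0) := by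
  rcases eq_or_ne v 0 with rfl | hv
  · simp [gaussianPDFReal_def]
  have hsq : Tendsto (fun x => -(x - μ) ^ 2 / (2 * v)) atTop atBot := by
    refine (tendsto_neg_atTop_atBot.comp ?_).atBot_div_const (by positivity)
    exact (tendsto_pow_atTop two_ne_zero).comp (tendsto_atTop_add_const_right _ (-μ) tendsto_id)
  rw [gaussianPDFReal_def]
  simpa only [mul_zero, Function.comp_def] using
    (tendsto_exp_atBot.comp hsq).const_mul (√(2 * π * v))⁻¹

theorem one_sub_cdf_gaussianReal (μ : ℝ) {v : ℝ≥0} (hv : v ≠ 0) (x : ℝ) :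
    1 - cdf (gaussianReal μ v) x = ∫ t in Ioi x, gaussianPDFReal μ v t := by
  rw [cdf_eq_real, ← compl_Ioi, measureReal_compl measurableSet_Ioi, probReal_univ, sub_sub_cancel,
    measureReal_def, gaussianReal_apply_eq_integral μ hv,
    ENNReal.toReal_ofReal
      (setIntegral_nonneg measurableSet_Ioi fun t _ => gaussianPDFReal_nonneg μ v t)]

theorem setIntegral_lt_setIntegral {X : Type*} [MeasurableSpace X] {μ : Measure X} {s : Set X}
    {f g : X → ℝ} (hs : MeasurableSet s) (hμs : μ s ≠ 0) (hf : IntegrableOn f s μ)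
    (hg : IntegrableOn g s μ) (hfg : ∀ x ∈ s, f x < g x) :
    ∫ x in s, f x ∂μ < ∫ x in s, g x ∂μ := by
  rw [← sub_pos, ← integral_sub hg hf, setIntegral_pos_iff_support_of_nonneg_ae
    ((ae_restrict_iff' hs).2 (ae_of_all _ fun x hx => sub_nonneg.2 (hfg x hx).le)) (hg.sub hf)]
  refine (pos_iff_ne_zero.2 hμs).trans_le (measure_mono fun x hx => ⟨?_, hx⟩)
  exact (sub_pos.2 (hfg x hx)).ne'

theorem hasDerivAt_neg_gaussianPDFReal_div_one_add {x : ℝ} (hx : 1 + x ≠ 0) :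
    HasDerivAt (fun t => -gaussianPDFReal 0 1 t / (1 + t))
      (gaussianPDFReal 0 1 x * ((1 + x + x ^ 2) / (1 + x) ^ 2)) x := by
  refine ((hasDerivAt_gaussianPDFReal 0 1 x).neg.div
    ((hasDerivAt_id' x).const_add 1) hx).congr_deriv ?_
  simp only [Pi.neg_apply, NNReal.coe_one, sub_zero, div_one]
  field_simp
  ring

theorem integral_Ioi_gaussianPDFReal_mul_eq_div_one_add {x : ℝ} (hx : -1 < x) :
    IntegrableOn (fun t => gaussianPDFReal 0 1 t * ((1 + t + t ^ 2) / (1 + t) ^ 2)) (Ioi x) ∧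
    ∫ t in Ioi x, gaussianPDFReal 0 1 t * ((1 + t + t ^ 2) / (1 + t) ^ 2) =
      gaussianPDFReal 0 1 x / (1 + x) := by
  have hderiv : ∀ t ∈ Ici x, HasDerivAt (fun t => -gaussianPDFReal 0 1 t / (1 + t))
      (gaussianPDFReal 0 1 t * ((1 + t + t ^ 2) / (1 + t) ^ 2)) t :=
    fun t ht => hasDerivAt_neg_gaussianPDFReal_div_one_add (by linarith [mem_Ici.1 ht])
  have hnonneg : ∀ t ∈ Ioi x, 0 ≤ gaussianPDFReal 0 1 t * ((1 + t + t ^ 2) / (1 + t) ^ 2) :=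
    fun t _ => mul_nonneg (gaussianPDFReal_nonneg 0 1 t) (div_nonneg (by nlinarith) (sq_nonneg _))
  have hlim : Tendsto (fun t => -gaussianPDFReal 0 1 t / (1 + t)) atTop (𝓝 0) := by
    simpa using (tendsto_gaussianPDFReal_atTop 0 1).neg.div_atTop
      (tendsto_atTop_add_const_left _ 1 tendsto_id)
  refine ⟨integrableOn_Ioi_deriv_of_nonneg' hderiv hnonneg hlim, ?_⟩
  rw [integral_Ioi_of_hasDerivAt_of_nonneg' hderiv hnonneg hlim]
  ring

theorem one_add_add_sq_div_one_add_sq_lt_one {t : ℝ} (ht : 0 < t) :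
    (1 + t + t ^ 2) / (1 + t) ^ 2 < 1 := by
  rw [div_lt_one (by positivity)]
  nlinarith

theorem one_lt_two_mul_one_add_add_sq_div_one_add_sq {t : ℝ} (ht : 1 + t ≠ 0) :
    1 < 2 * ((1 + t + t ^ 2) / (1 + t) ^ 2) := by
  rw [← mul_div_assoc, one_lt_div (by positivity)]
  nlinarith [sq_nonneg t]

/-- For `x > 0`, the standard normal CDF `Φ` satisfies
`φ(x)/(1+x) < 1 - Φ(x) < 2 φ(x)/(1+x)`, where `φ` is the standard normal density. -/
theorem gaussian_cdf_tail_bounds (x : ℝ) (hx : 0 < x) :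
    gaussianPDFReal 0 1 x / (1 + x) < 1 - cdf (gaussianReal 0 1) x ∧
    1 - cdf (gaussianReal 0 1) x < 2 * gaussianPDFReal 0 1 x / (1 + x) := by
  obtain ⟨hint, heq⟩ := integral_Ioi_gaussianPDFReal_mul_eq_div_one_add (x := x) (by linarith)
  have hpdf : IntegrableOn (gaussianPDFReal 0 1) (Ioi x) :=
    (integrable_gaussianPDFReal 0 1).integrableOn
  have hvol : volume (Ioi x) ≠ 0 := by simp
  rw [one_sub_cdf_gaussianReal 0 one_ne_zero, mul_div_assoc, ← heq, ← integral_const_mul]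
  constructor
  · refine setIntegral_lt_setIntegral measurableSet_Ioi hvol hint hpdf fun t ht => ?_
    exact mul_lt_of_lt_one_right (gaussianPDFReal_pos 0 1 t one_ne_zero)
      (one_add_add_sq_div_one_add_sq_lt_one (hx.trans ht))
  · refine setIntegral_lt_setIntegral measurableSet_Ioi hvol hpdf (hint.const_mul 2) fun t ht => ?_
    have hweight :=
      one_lt_two_mul_one_add_add_sq_div_one_add_sq (t := t) (by linarith [hx.trans ht])
    nlinarith [gaussianPDFReal_pos 0 1 t one_ne_zero]
end

section
/- Let F be the CDF of a χ²₁ random variable. For all t > 0, √(2/π)·exp(−t/2)/(1+√t) < 1 − F(t) < √(8/π)·exp(−t/2)/(1+√t). -/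
open ProbabilityTheory MeasureTheory Real Set Filter Topology

/-! By symmetry of the standard Gaussian, `1 - F t = P(|ε| > √t) = √(2/π) ∫_{√t}^∞ e^{-u²/2} du`.
The function `-e^{-u²/2}/(1+u)` has derivative `g u = e^{-u²/2} (u²+u+1)/(1+u)²`, and
`g u < e^{-u²/2} < 2 g u` for `u > 0`: the two gaps are `e^{-u²/2} u/(1+u)²` and
`e^{-u²/2} (u²+1)/(1+u)²`. Integrating over `(√t, ∞)` gives both bounds. -/

lemma setIntegral_lt_setIntegral_of_forall_lt {X : Type*} [MeasurableSpace X] {μ : Measure X}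
    {s : Set X} {f g : X → ℝ} (hs : MeasurableSet s) (hμs : μ s ≠ 0)
    (hf : IntegrableOn f s μ) (hg : IntegrableOn g s μ) (hlt : ∀ x ∈ s, f x < g x) :
    ∫ x in s, f x ∂μ < ∫ x in s, g x ∂μ := by
  have hpos : 0 < ∫ x in s, (g - f) x ∂μ := by
    rw [setIntegral_pos_iff_support_of_nonneg_ae _ (hg.sub hf)]
    · refine (pos_iff_ne_zero.mpr hμs).trans_le (measure_mono fun x hx ↦ ⟨?_, hx⟩)
      exact (sub_pos.mpr (hlt x hx)).ne'
    · filter_upwards [ae_restrict_mem hs] with x hx using (sub_pos.mpr (hlt x hx)).le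
  rwa [Pi.sub_def, integral_sub hg hf, sub_pos] at hpos

lemma integrableOn_exp_neg_sq_div_two (s : Set ℝ) :
    IntegrableOn (fun u : ℝ ↦ exp (-u ^ 2 / 2)) s := by
  have h := integrable_exp_neg_mul_sq (b := 1 / 2) (by norm_num)
  refine (h.congr (ae_of_all _ fun u ↦ ?_)).integrableOn
  simp only
  ring_nf

lemma hasDerivAt_neg_exp_neg_sq_div_two_div_one_add {u : ℝ} (hu : 1 + u ≠ 0) :
    HasDerivAt (fun u : ℝ ↦ -(exp (-u ^ 2 / 2) / (1 + u)))
      (exp (-u ^ 2 / 2) * (u ^ 2 + u + 1) / (1 + u) ^ 2) u := by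
  have hexp : HasDerivAt (fun u : ℝ ↦ exp (-u ^ 2 / 2)) (exp (-u ^ 2 / 2) * (-u)) u := by
    have hquad : HasDerivAt (fun u : ℝ ↦ -u ^ 2 / 2) (-u) u := by
      simpa using ((hasDerivAt_pow 2 u).neg.div_const 2).congr_deriv (by ring)
    exact hquad.exp
  have hden : HasDerivAt (fun u : ℝ ↦ 1 + u) 1 u := (hasDerivAt_id u).const_add 1
  exact (hexp.div hden hu).neg.congr_deriv (by ring)

lemma tendsto_exp_neg_sq_div_two_div_one_add_atTop :
    Tendsto (fun u : ℝ ↦ exp (-u ^ 2 / 2) / (1 + u)) atTop (𝓝 0) := by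
  have hexp : Tendsto (fun u : ℝ ↦ exp (-u ^ 2 / 2)) atTop (𝓝 0) := by
    refine tendsto_exp_atBot.comp ?_
    simp_rw [neg_div]
    exact tendsto_neg_atTop_atBot.comp
      ((tendsto_pow_atTop (n := 2) two_ne_zero).atTop_div_const (two_pos : (0 : ℝ) < 2))
  exact hexp.div_atTop (tendsto_atTop_add_const_left _ 1 tendsto_id)

section TailIntegral

variable {x : ℝ}

lemma exp_neg_sq_div_two_mul_div_nonneg (u : ℝ) :
    0 ≤ exp (-u ^ 2 / 2) * (u ^ 2 + u + 1) / (1 + u) ^ 2 := by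
  have : 0 ≤ u ^ 2 + u + 1 := by nlinarith [sq_nonneg (u + 1 / 2)]
  positivity

lemma integrableOn_Ioi_exp_neg_sq_div_two_mul_div (hx : -1 < x) :
    IntegrableOn (fun u : ℝ ↦ exp (-u ^ 2 / 2) * (u ^ 2 + u + 1) / (1 + u) ^ 2) (Ioi x) :=
  integrableOn_Ioi_deriv_of_nonneg'
    (fun u hu ↦ hasDerivAt_neg_exp_neg_sq_div_two_div_one_add (by linarith [mem_Ici.mp hu]))
    (fun u _ ↦ exp_neg_sq_div_two_mul_div_nonneg u)
    tendsto_exp_neg_sq_div_two_div_one_add_atTop.neg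

lemma integral_Ioi_exp_neg_sq_div_two_mul_div (hx : -1 < x) :
    ∫ u in Ioi x, exp (-u ^ 2 / 2) * (u ^ 2 + u + 1) / (1 + u) ^ 2
      = exp (-x ^ 2 / 2) / (1 + x) := by
  rw [integral_Ioi_of_hasDerivAt_of_nonneg'
    (fun u hu ↦ hasDerivAt_neg_exp_neg_sq_div_two_div_one_add (by linarith [mem_Ici.mp hu]))
    (fun u _ ↦ exp_neg_sq_div_two_mul_div_nonneg u)
    tendsto_exp_neg_sq_div_two_div_one_add_atTop.neg]
  ring

lemma exp_neg_sq_div_two_div_one_add_lt_integral_Ioi (hx : 0 < x) :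
    exp (-x ^ 2 / 2) / (1 + x) < ∫ u in Ioi x, exp (-u ^ 2 / 2) := by
  rw [← integral_Ioi_exp_neg_sq_div_two_mul_div (by linarith)]
  refine setIntegral_lt_setIntegral_of_forall_lt measurableSet_Ioi (by simp)
    (integrableOn_Ioi_exp_neg_sq_div_two_mul_div (by linarith))
    (integrableOn_exp_neg_sq_div_two _) fun u hu ↦ ?_
  have hu : 0 < u := hx.trans hu
  have hgap : exp (-u ^ 2 / 2) - exp (-u ^ 2 / 2) * (u ^ 2 + u + 1) / (1 + u) ^ 2
      = exp (-u ^ 2 / 2) * u / (1 + u) ^ 2 := by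
    field_simp
    ring
  have : 0 < exp (-u ^ 2 / 2) * u / (1 + u) ^ 2 := by positivity
  linarith

lemma integral_Ioi_lt_two_mul_exp_neg_sq_div_two_div_one_add (hx : -1 < x) :
    ∫ u in Ioi x, exp (-u ^ 2 / 2) < 2 * (exp (-x ^ 2 / 2) / (1 + x)) := by
  rw [← integral_Ioi_exp_neg_sq_div_two_mul_div hx, ← integral_const_mul]
  refine setIntegral_lt_setIntegral_of_forall_lt measurableSet_Ioi (by simp)
    (integrableOn_exp_neg_sq_div_two _)
    ((integrableOn_Ioi_exp_neg_sq_div_two_mul_div hx).const_mul 2) fun u hu ↦ ?_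
  have hu : 0 < 1 + u := by linarith [mem_Ioi.mp hu]
  have hgap : 2 * (exp (-u ^ 2 / 2) * (u ^ 2 + u + 1) / (1 + u) ^ 2) - exp (-u ^ 2 / 2)
      = exp (-u ^ 2 / 2) * (u ^ 2 + 1) / (1 + u) ^ 2 := by
    field_simp
    ring
  have : 0 < exp (-u ^ 2 / 2) * (u ^ 2 + 1) / (1 + u) ^ 2 := by positivity
  linarith

end TailIntegral

section Gaussian

open scoped NNReal

lemma gaussianReal_Iio_neg (v : ℝ≥0) (x : ℝ) :
    gaussianReal 0 v (Iio (-x)) = gaussianReal 0 v (Ioi x) := by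
  conv_lhs => rw [← neg_zero, ← gaussianReal_map_neg]
  rw [Measure.map_apply measurable_neg measurableSet_Iio]
  congr 1
  ext u
  simp

lemma one_sub_gaussianReal_sq_le_sq (v : ℝ≥0) {x : ℝ} (hx : 0 ≤ x) :
    1 - (gaussianReal 0 v {u | u ^ 2 ≤ x ^ 2}).toReal = 2 * (gaussianReal 0 v).real (Ioi x) := by
  have hmeas : MeasurableSet {u : ℝ | u ^ 2 ≤ x ^ 2} := measurableSet_le (by fun_prop) (by fun_prop)
  have hcompl : {u : ℝ | u ^ 2 ≤ x ^ 2}ᶜ = Iio (-x) ∪ Ioi x := by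
    ext u
    simp [sq_le_sq, abs_of_nonneg hx, abs_le, or_iff_not_imp_left]
  have hdisj : Disjoint (Iio (-x)) (Ioi x) :=
    (Iio_disjoint_Ici (neg_le_self hx)).mono_right Ioi_subset_Ici_self
  rw [← measureReal_def, ← probReal_compl_eq_one_sub hmeas, hcompl,
    measureReal_union hdisj measurableSet_Ioi, measureReal_def, gaussianReal_Iio_neg,
    ← measureReal_def]
  ring

lemma gaussianReal_real_Ioi (x : ℝ) :
    (gaussianReal 0 1).real (Ioi x) = (√(2 * π))⁻¹ * ∫ u in Ioi x, exp (-u ^ 2 / 2) := by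
  rw [measureReal_def, gaussianReal_apply_eq_integral 0 one_ne_zero,
    ENNReal.toReal_ofReal (setIntegral_nonneg measurableSet_Ioi
      fun u _ ↦ gaussianPDFReal_nonneg 0 1 u), ← integral_const_mul]
  simp [gaussianPDFReal]

end Gaussian

/-- Let `F` be the CDF of a `χ²₁` random variable, i.e. `F t = P(ε² ≤ t)` for `ε ~ N(0,1)`.
For all `t > 0`,
`√(2/π) exp(-t/2)/(1+√t) < 1 - F t < √(8/π) exp(-t/2)/(1+√t)`. -/
theorem chi_squared_one_tail_bounds (t : ℝ) (ht : 0 < t) :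
    Real.sqrt (2 / Real.pi) * Real.exp (-t / 2) / (1 + Real.sqrt t) <
      1 - ((gaussianReal 0 1) {x : ℝ | x ^ 2 ≤ t}).toReal ∧
    1 - ((gaussianReal 0 1) {x : ℝ | x ^ 2 ≤ t}).toReal <
      Real.sqrt (8 / Real.pi) * Real.exp (-t / 2) / (1 + Real.sqrt t) := by
  obtain ⟨x, hx, rfl⟩ : ∃ x, 0 < x ∧ t = x ^ 2 := ⟨√t, sqrt_pos.mpr ht, (sq_sqrt ht.le).symm⟩
  have hsqrt (a : ℝ) (ha : 0 ≤ a) : √(a ^ 2 / (2 * π)) = a * (√(2 * π))⁻¹ := by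
    rw [sqrt_div' _ (by positivity), sqrt_sq ha, div_eq_mul_inv]
  have hc : 0 < 2 * (√(2 * π))⁻¹ := by positivity
  rw [sqrt_sq hx.le, one_sub_gaussianReal_sq_le_sq 1 hx.le, gaussianReal_real_Ioi,
    show 2 / π = 2 ^ 2 / (2 * π) by ring, show 8 / π = 4 ^ 2 / (2 * π) by ring,
    hsqrt 2 zero_le_two, hsqrt 4 zero_le_four]
  constructor
  · linear_combination
      mul_lt_mul_of_pos_left (exp_neg_sq_div_two_div_one_add_lt_integral_Ioi hx) hc
  · linear_combination mul_lt_mul_of_pos_left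
      (integral_Ioi_lt_two_mul_exp_neg_sq_div_two_div_one_add (by linarith : -1 < x)) hc
end

section
/- Let K ∈ ℝ^{n×n} be symmetric positive semi-definite with eigendecomposition K = UΛUᵀ. For t ∈ [0,∞], ρ ≥ 0, define the gradient-flow coefficient vector c_{t,ρ} = (I − exp(−(2t/n)(K + ρnI)))(K + ρnI)⁻¹ y. Then the RKHS norm squared c_{t,ρ}ᵀ K c_{t,ρ} is monotonically nondecreasing in t and is bounded above by the minimum-norm-interpolant value yᵀ K⁺ y for all t and ρ. -/
/-!
Every matrix in the statement is a function of `K`: with `a = ρn` and `s = 2t/n`,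
`c_t = φ_s(K + a) y` for the filter `φ_s(x) = (1 - e^{-sx}) / x`, and hence
`c_tᵀ K c_t = yᵀ ψ_s(K) y` with `ψ_s(λ) = λ φ_s(λ + a)²`. On the spectrum `λ ≥ 0` of `K`,
`ψ_s(λ)` is nondecreasing in `s ≥ 0` and bounded by `λ⁻¹`, so both claims follow from the
monotonicity of the functional calculus in the Loewner order. If `K + a` is singular, the
matrix inverse is the junk value `0`, so `c_t = 0` and only `yᵀ K⁺ y ≥ 0` is left.
-/

open Matrix

open scoped MatrixOrder

noncomputable def gradientFlowFilter (s x : ℝ) : ℝ := (1 - Real.exp (-s * x)) / x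

lemma gradientFlowFilter_nonneg {s x : ℝ} (hs : 0 ≤ s) (hx : 0 ≤ x) :
    0 ≤ gradientFlowFilter s x :=
  div_nonneg (sub_nonneg.mpr (Real.exp_le_one_iff.mpr (by nlinarith))) hx

lemma gradientFlowFilter_mono {x : ℝ} (hx : 0 ≤ x) : Monotone (gradientFlowFilter · x) :=
  fun _ _ h => div_le_div_of_nonneg_right (by gcongr) hx

lemma gradientFlowFilter_le_inv (s : ℝ) {x : ℝ} (hx : 0 ≤ x) : gradientFlowFilter s x ≤ x⁻¹ := by
  rw [gradientFlowFilter, div_eq_mul_inv]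
  exact mul_le_of_le_one_left (inv_nonneg.mpr hx) (by linarith [Real.exp_pos (-s * x)])

lemma mul_sq_le_inv_of_le_inv {x g : ℝ} (hx : 0 < x) (hg : 0 ≤ g) (h : g ≤ x⁻¹) :
    x * g ^ 2 ≤ x⁻¹ :=
  calc x * g ^ 2 ≤ x * x⁻¹ ^ 2 := by gcongr
    _ = x⁻¹ := by field_simp

lemma mul_gradientFlowFilter_sq_mono {x a s s' : ℝ} (hx : 0 ≤ x) (ha : 0 ≤ a) (hs : 0 ≤ s)
    (h : s ≤ s') : x * gradientFlowFilter s (x + a) ^ 2 ≤ x * gradientFlowFilter s' (x + a) ^ 2 := by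
  have hxa : 0 ≤ x + a := add_nonneg hx ha
  gcongr
  · exact gradientFlowFilter_nonneg hs hxa
  · exact gradientFlowFilter_mono hxa h

lemma mul_gradientFlowFilter_sq_le_inv {x a s : ℝ} (hx : 0 ≤ x) (ha : 0 ≤ a) (hs : 0 ≤ s) :
    x * gradientFlowFilter s (x + a) ^ 2 ≤ x⁻¹ := by
  rcases hx.eq_or_lt with rfl | hx
  · simp
  have hxa : 0 ≤ x + a := by positivity
  refine mul_sq_le_inv_of_le_inv hx (gradientFlowFilter_nonneg hs hxa) ?_
  calc gradientFlowFilter s (x + a) ≤ (x + a)⁻¹ := gradientFlowFilter_le_inv s hxa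
    _ ≤ x⁻¹ := inv_anti₀ hx (le_add_of_nonneg_right ha)

namespace Matrix

variable {ι : Type*} [Fintype ι]

lemma dotProduct_mulVec_le_of_le {A B : Matrix ι ι ℝ} (h : A ≤ B) (y : ι → ℝ) :
    y ⬝ᵥ (A *ᵥ y) ≤ y ⬝ᵥ (B *ᵥ y) := by
  have := (le_iff.mp h).dotProduct_mulVec_nonneg y
  rwa [star_trivial, sub_mulVec, dotProduct_sub, sub_nonneg] at this

variable [DecidableEq ι]

lemma continuousOn_spectrum (A : Matrix ι ι ℝ) (f : ℝ → ℝ) : ContinuousOn f (spectrum ℝ A) :=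
  A.finite_spectrum.continuousOn f

lemma transpose_cfc (f : ℝ → ℝ) (A : Matrix ι ι ℝ) : (cfc f A)ᵀ = cfc f A := by
  rw [← conjTranspose_eq_transpose_of_trivial]
  exact (cfc_predicate f A).star_eq

namespace IsHermitian

variable {A : Matrix ι ι ℝ}

lemma exp_cfc (hA : A.IsHermitian) (f : ℝ → ℝ) :
    NormedSpace.exp (cfc f A) = cfc (fun x => Real.exp (f x)) A := by
  rw [hA.cfc_eq, hA.cfc_eq, IsHermitian.cfc, IsHermitian.cfc, Unitary.conjStarAlgAut_apply,
    Unitary.conjStarAlgAut_apply]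
  have hconj := Matrix.exp_units_conj (Unitary.toUnits hA.eigenvectorUnitary)
    (diagonal (RCLike.ofReal ∘ f ∘ hA.eigenvalues))
  simp only [Unitary.val_toUnits_apply, Unitary.val_inv_toUnits_apply, ← Unitary.star_eq_inv,
    Unitary.coe_star] at hconj
  rw [hconj, exp_diagonal]
  congr 3
  ext i
  simp [Real.exp_eq_exp_ℝ]

lemma add_smul_one_eq_cfc (hA : A.IsHermitian) (a : ℝ) : A + a • 1 = cfc (· + a) A := by
  rw [cfc_add_const a _ A (A.continuousOn_spectrum _) hA.isSelfAdjoint,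
    cfc_id' ℝ A hA.isSelfAdjoint, Algebra.algebraMap_eq_smul_one]

lemma one_sub_exp_mul_inv_eq_cfc (hA : A.IsHermitian) (s a : ℝ) (h : IsUnit (A + a • 1)) :
    (1 - NormedSpace.exp ((-s) • (A + a • 1))) * (A + a • 1)⁻¹ =
      cfc (fun x => gradientFlowFilter s (x + a)) A := by
  have hcont := A.continuousOn_spectrum
  rw [hA.add_smul_one_eq_cfc] at h ⊢
  rw [nonsing_inv_eq_ringInverse, ← cfc_inv _ A ((isUnit_cfc_iff _ A (hcont _)).mp h) (hcont _),
    ← cfc_const_mul _ _ A (hcont _), hA.exp_cfc, ← cfc_const_one ℝ A,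
    ← cfc_sub _ _ A (hcont _) (hcont _), ← cfc_mul _ _ A (hcont _) (hcont _)]
  exact cfc_congr fun x _ => (div_eq_mul_inv _ _).symm

lemma cfc_mulVec_dotProduct_mulVec_cfc_mulVec (hA : A.IsHermitian) (f : ℝ → ℝ) (y : ι → ℝ) :
    (cfc f A *ᵥ y) ⬝ᵥ (A *ᵥ (cfc f A *ᵥ y)) = y ⬝ᵥ (cfc (fun x => x * f x ^ 2) A *ᵥ y) := by
  have hcont := A.continuousOn_spectrum
  have hprod : cfc (fun x => x * f x ^ 2) A = cfc f A * (A * cfc f A) := calc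
    _ = cfc (fun x => f x * (x * f x)) A := cfc_congr fun x _ => by ring
    _ = cfc f A * (A * cfc f A) := by
      rw [cfc_mul _ _ A (hcont _) (hcont _), cfc_mul _ _ A (hcont _) (hcont _),
        cfc_id' ℝ A hA.isSelfAdjoint]
  rw [hprod, ← mulVec_mulVec, ← mulVec_mulVec, ← vecMul_transpose, ← dotProduct_mulVec,
    transpose_cfc]

end IsHermitian

end Matrix

lemma hermPinv_eq_cfc {n : ℕ} {K : Matrix (Fin n) (Fin n) ℝ} (hK : K.IsHermitian) :
    hermPinv hK = cfc (fun x : ℝ => x⁻¹) K := by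
  rw [hK.cfc_eq, IsHermitian.cfc, Unitary.conjStarAlgAut_apply, hermPinv]
  rfl

theorem gradient_flow_rkhs_norm_monotone_and_bounded_general
    {n : ℕ} (K : Matrix (Fin n) (Fin n) ℝ) (hK : K.PosSemidef)
    (y : Fin n → ℝ) (ρ : ℝ) (hρ : 0 ≤ ρ)
    (cvec : ℝ → Fin n → ℝ)
    (hcvec : ∀ t : ℝ, cvec t =
      (((1 : Matrix (Fin n) (Fin n) ℝ) -
          NormedSpace.exp ((-(2 * t / (n : ℝ))) •
            (K + (ρ * (n : ℝ)) • (1 : Matrix (Fin n) (Fin n) ℝ)))) *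
        (K + (ρ * (n : ℝ)) • (1 : Matrix (Fin n) (Fin n) ℝ))⁻¹) *ᵥ y) :
    (∀ t₁ t₂ : ℝ, 0 ≤ t₁ → t₁ ≤ t₂ →
      cvec t₁ ⬝ᵥ (K *ᵥ cvec t₁) ≤ cvec t₂ ⬝ᵥ (K *ᵥ cvec t₂)) ∧
    (∀ t : ℝ, 0 ≤ t → cvec t ⬝ᵥ (K *ᵥ cvec t) ≤ y ⬝ᵥ (hermPinv hK.1 *ᵥ y)) := by
  have ha : 0 ≤ ρ * n := by positivity
  have hspec : ∀ x ∈ spectrum ℝ K, 0 ≤ x := fun x hx => spectrum_nonneg_of_nonneg hK.nonneg hx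
  have hcont := K.continuousOn_spectrum
  by_cases hunit : IsUnit (K + (ρ * n) • 1)
  · have hnorm : ∀ t, cvec t ⬝ᵥ (K *ᵥ cvec t) = y ⬝ᵥ
        (cfc (fun x => x * gradientFlowFilter (2 * t / n) (x + ρ * n) ^ 2) K *ᵥ y) := fun t => by
      rw [hcvec, hK.1.one_sub_exp_mul_inv_eq_cfc _ _ hunit,
        hK.1.cfc_mulVec_dotProduct_mulVec_cfc_mulVec]
    refine ⟨fun t₁ t₂ ht₁ ht => ?_, fun t ht => ?_⟩
    · rw [hnorm, hnorm]
      refine dotProduct_mulVec_le_of_le (cfc_mono (fun x hx => ?_) (hcont _) (hcont _)) y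
      exact mul_gradientFlowFilter_sq_mono (hspec x hx) ha (by positivity)
        (div_le_div_of_nonneg_right (by linarith) n.cast_nonneg)
    · rw [hnorm, hermPinv_eq_cfc]
      refine dotProduct_mulVec_le_of_le (cfc_mono (fun x hx => ?_) (hcont _) (hcont _)) y
      exact mul_gradientFlowFilter_sq_le_inv (hspec x hx) ha (by positivity)
  · have hzero : ∀ t, cvec t = 0 := fun t => by
      rw [hcvec, nonsing_inv_eq_ringInverse, Ring.inverse_non_unit _ hunit, mul_zero, zero_mulVec]
    refine ⟨fun t₁ t₂ _ _ => by rw [hzero, hzero], fun t _ => ?_⟩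
    rw [hzero, zero_dotProduct, hermPinv_eq_cfc]
    have hpinv : 0 ≤ cfc (fun x : ℝ => x⁻¹) K := cfc_nonneg fun x hx => inv_nonneg.mpr (hspec x hx)
    simpa using hpinv.posSemidef.dotProduct_mulVec_nonneg y

/-- Let `K` be a symmetric PSD kernel matrix, `y ∈ ℝⁿ`, `ρ ≥ 0`, and let
`c_{t,ρ} = (I - exp(-(2t/n)(K + ρnI))) (K + ρnI)⁻¹ y` be the gradient-flow coefficients.
Then the squared RKHS norm `c_{t,ρ}ᵀ K c_{t,ρ}` is monotonically nondecreasing in `t` and is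
bounded above by the minimum-norm-interpolant value `yᵀ K⁺ y` for all `t ≥ 0` and `ρ ≥ 0`. -/
theorem gradient_flow_rkhs_norm_monotone_and_bounded
    {n : ℕ} (hn : 0 < n) (K : Matrix (Fin n) (Fin n) ℝ) (hK : K.PosSemidef)
    (y : Fin n → ℝ) (ρ : ℝ) (hρ : 0 ≤ ρ)
    (cvec : ℝ → Fin n → ℝ)
    (hcvec : ∀ t : ℝ, cvec t =
      (((1 : Matrix (Fin n) (Fin n) ℝ) -
          NormedSpace.exp ((-(2 * t / (n : ℝ))) •
            (K + (ρ * (n : ℝ)) • (1 : Matrix (Fin n) (Fin n) ℝ)))) *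
        (K + (ρ * (n : ℝ)) • (1 : Matrix (Fin n) (Fin n) ℝ))⁻¹) *ᵥ y) :
    (∀ t₁ t₂ : ℝ, 0 ≤ t₁ → t₁ ≤ t₂ →
      cvec t₁ ⬝ᵥ (K *ᵥ cvec t₁) ≤ cvec t₂ ⬝ᵥ (K *ᵥ cvec t₂)) ∧
    (∀ t : ℝ, 0 ≤ t → cvec t ⬝ᵥ (K *ᵥ cvec t) ≤ y ⬝ᵥ (hermPinv hK.1 *ᵥ y)) :=
  gradient_flow_rkhs_norm_monotone_and_bounded_general K hK y ρ hρ cvec hcvec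
end
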